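/- arXiv:1804.05959 — 6 statements merged into one kernel-verified Lean document; each statement's English description precedes it below -/
import Mathlib

section
/- Let x be a mean-zero random vector in R^d satisfying the small-ball bound P(|⟨x,v⟩| ≥ 2δ‖v‖₂) ≥ 2Q for all v, and with E[x_j^4] ≤ ν for every coordinate j. Define the coordinatewise truncation x̃ by x̃_j = sign(x_j)(|x_j| ∧ τ) with τ = (N/log(ed))^{1/4}. If N ≥ (ν/Q) s₀ log(ed), then for every vector v ∈ R^d supported on at most s₀ coordinates, P(|⟨x̃,v⟩| ≥ δ‖v‖₂) ≥ Q. -/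
open MeasureTheory Real
open scoped Classical

noncomputable section

/-! On the event that every coordinate of `x` in the support of `v` has modulus at most `τ`, the
truncation does not change `⟨x, v⟩`. By Markov's inequality applied to `∑_{j ∈ supp v} x_j⁴`, the
complementary event has probability at most `s₀ ν / τ⁴ ≤ Q`, which is where the choice of `τ` and the
lower bound on `N` enter. Removing it from the small-ball event for `x` (of probability `≥ 2Q`)
leaves probability `≥ Q`. -/

lemma Real.sign_mul_min_abs_of_abs_le {r τ : ℝ} (h : |r| ≤ τ) : Real.sign r * min |r| τ = r := by
  rw [min_eq_left h]
  rcases lt_trichotomy r 0 with hr | rfl | hr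
  · rw [Real.sign_of_neg hr, abs_of_neg hr]; ring
  · simp
  · rw [Real.sign_of_pos hr, abs_of_pos hr]; ring

lemma sum_sign_mul_min_abs_mul_eq_of_abs_le {ι : Type*} [Fintype ι] (a v : ι → ℝ) {τ : ℝ}
    (h : ∀ j, v j ≠ 0 → |a j| ≤ τ) :
    ∑ j, Real.sign (a j) * min |a j| τ * v j = ∑ j, a j * v j := by
  refine Finset.sum_congr rfl fun j _ => ?_
  by_cases hvj : v j = 0
  · simp [hvj]
  · rw [Real.sign_mul_min_abs_of_abs_le (h j hvj)]

lemma Real.log_exp_one_mul_pos {d : ℝ} (hd : 1 ≤ d) : 0 < Real.log (Real.exp 1 * d) :=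
  Real.log_pos (one_lt_mul_of_lt_of_le (Real.one_lt_exp_iff.mpr one_pos) hd)

lemma Real.rpow_one_div_four_pow_four {c : ℝ} (hc : 0 ≤ c) : (c ^ ((1 : ℝ) / 4)) ^ 4 = c := by
  rw [one_div]
  exact_mod_cast Real.rpow_inv_natCast_pow hc four_ne_zero

namespace MeasureTheory

variable {Ω : Type*} [MeasurableSpace Ω] {μ : Measure Ω}

lemma le_measure_of_diff_subset {A E T : Set Ω} {p q : ENNReal} (hsub : A \ E ⊆ T)
    (hA : p + q ≤ μ A) (hE : μ E ≤ q) (hq : q ≠ ⊤) : p ≤ μ T :=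
  calc p = p + q - q := (ENNReal.add_sub_cancel_right hq).symm
    _ ≤ μ A - μ E := tsub_le_tsub hA hE
    _ ≤ μ (A \ E) := le_measure_sdiff
    _ ≤ μ T := measure_mono hsub

lemma measure_exists_le_le_ofReal_sum_integral_div [IsFiniteMeasure μ] {ι : Type*}
    (S : Finset ι) {f : ι → Ω → ℝ} (hf_nonneg : ∀ j ω, 0 ≤ f j ω)
    (hf_int : ∀ j, Integrable (f j) μ) {t : ℝ} (ht : 0 < t) :
    μ {ω | ∃ j ∈ S, t ≤ f j ω} ≤ ENNReal.ofReal ((∑ j ∈ S, ∫ ω, f j ω ∂μ) / t) := by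
  have hsub : {ω | ∃ j ∈ S, t ≤ f j ω} ⊆ {ω | t ≤ ∑ j ∈ S, f j ω} := by
    rintro ω ⟨j, hj, htj⟩
    exact htj.trans (Finset.single_le_sum (fun i _ => hf_nonneg i ω) hj)
  have hmarkov := mul_meas_ge_le_integral_of_nonneg
    (ae_of_all μ fun ω => Finset.sum_nonneg fun j _ => hf_nonneg j ω)
    (integrable_finsetSum S fun j _ => hf_int j) t
  rw [integral_finsetSum S fun j _ => hf_int j] at hmarkov
  calc μ {ω | ∃ j ∈ S, t ≤ f j ω} ≤ μ {ω | t ≤ ∑ j ∈ S, f j ω} := measure_mono hsub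
    _ = ENNReal.ofReal (μ.real {ω | t ≤ ∑ j ∈ S, f j ω}) := (ofReal_measureReal).symm
    _ ≤ _ := ENNReal.ofReal_le_ofReal ((le_div_iff₀ ht).mpr (by linarith))

lemma measure_exists_lt_abs_le_ofReal_sum_fourth_moment_div [IsFiniteMeasure μ] {ι : Type*}
    (S : Finset ι) {X : ι → Ω → ℝ} (hX : ∀ j, Integrable (fun ω => X j ω ^ 4) μ) {τ : ℝ}
    (hτ : 0 < τ) :
    μ {ω | ∃ j ∈ S, τ < |X j ω|} ≤
      ENNReal.ofReal ((∑ j ∈ S, ∫ ω, X j ω ^ 4 ∂μ) / τ ^ 4) := by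
  refine (measure_mono ?_).trans
    (measure_exists_le_le_ofReal_sum_integral_div S (fun j ω => by positivity) hX (by positivity))
  rintro ω ⟨j, hj, hτj⟩
  refine ⟨j, hj, ?_⟩
  calc τ ^ 4 ≤ |X j ω| ^ 4 := pow_le_pow_left₀ hτ.le hτj.le 4
    _ = X j ω ^ 4 := Even.pow_abs ⟨2, rfl⟩ _

end MeasureTheory

theorem truncated_small_ball_general
    {Ω : Type*} [MeasurableSpace Ω] (μ : Measure Ω) [IsProbabilityMeasure μ]
    {d : ℕ} (x : Ω → Fin d → ℝ)
    (δ Q ν : ℝ) (hδ : 0 < δ) (hQ : 0 < Q) (hν : 0 < ν)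
    (N : ℕ) (s₀ : ℕ) (hs₀ : 1 ≤ s₀) (hs₀d : s₀ ≤ d)
    (hsmallball : ∀ v : Fin d → ℝ,
      ENNReal.ofReal (2 * Q) ≤
        μ {ω | 2 * δ * Real.sqrt (∑ j, (v j) ^ 2) ≤ |∑ j, x ω j * v j|})
    (hint4 : ∀ j, Integrable (fun ω => (x ω j) ^ 4) μ)
    (hmom4 : ∀ j, ∫ ω, (x ω j) ^ 4 ∂μ ≤ ν)
    (hN : (ν / Q) * s₀ * Real.log (Real.exp 1 * d) ≤ N) :
    ∀ v : Fin d → ℝ,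
      (Finset.univ.filter fun j => v j ≠ 0).card ≤ s₀ →
      ENNReal.ofReal Q ≤
        μ {ω | δ * Real.sqrt (∑ j, (v j) ^ 2) ≤
          |∑ j, (Real.sign (x ω j) *
            min |x ω j| (((N : ℝ) / Real.log (Real.exp 1 * d)) ^ ((1 : ℝ) / 4))) * v j|} := by
  intro v hv
  set L := Real.log (Real.exp 1 * d)
  set τ := ((N : ℝ) / L) ^ ((1 : ℝ) / 4)
  set S := Finset.univ.filter fun j => v j ≠ 0
  have hL : 0 < L := Real.log_exp_one_mul_pos (by exact_mod_cast hs₀.trans hs₀d)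
  have hN_pos : (0 : ℝ) < N := lt_of_lt_of_le (by positivity) hN
  have hτ4 : τ ^ 4 = N / L := Real.rpow_one_div_four_pow_four (by positivity)
  have hmoments : ∑ j ∈ S, ∫ ω, x ω j ^ 4 ∂μ ≤ Q * τ ^ 4 :=
    calc ∑ j ∈ S, ∫ ω, x ω j ^ 4 ∂μ ≤ S.card * ν := by
          simpa using Finset.sum_le_sum fun j (_ : j ∈ S) => hmom4 j
      _ ≤ s₀ * ν := by gcongr
      _ ≤ Q * τ ^ 4 := by
          rw [hτ4, mul_div_assoc', le_div_iff₀ hL]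
          calc s₀ * ν * L = Q * (ν / Q * s₀ * L) := by field_simp
            _ ≤ Q * N := by gcongr
  have htail : μ {ω | ∃ j ∈ S, τ < |x ω j|} ≤ ENNReal.ofReal Q :=
    (measure_exists_lt_abs_le_ofReal_sum_fourth_moment_div S hint4 (by positivity)).trans
      (ENNReal.ofReal_le_ofReal ((div_le_iff₀ (by positivity)).mpr hmoments))
  have hball : ENNReal.ofReal Q + ENNReal.ofReal Q ≤
      μ {ω | 2 * δ * Real.sqrt (∑ j, (v j) ^ 2) ≤ |∑ j, x ω j * v j|} := by
    rw [← ENNReal.ofReal_add hQ.le hQ.le, ← two_mul]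
    exact hsmallball v
  refine le_measure_of_diff_subset ?_ hball htail ENNReal.ofReal_ne_top
  rintro ω ⟨hA, hB⟩
  have hclip : ∀ j, v j ≠ 0 → |x ω j| ≤ τ := fun j hvj => by
    by_contra h
    exact hB ⟨j, by simpa [S] using hvj, not_le.mp h⟩
  have hδv : 0 ≤ δ * Real.sqrt (∑ j, (v j) ^ 2) := by positivity
  simp only [Set.mem_ofPred_eq] at hA ⊢
  rw [sum_sign_mul_min_abs_mul_eq_of_abs_le (fun j => x ω j) v hclip]
  linarith

/-- The small-ball condition is preserved (with weaker constants) under coordinatewise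
adaptive truncation at level `τ = (N / log(ed))^{1/4}`, for `s₀`-sparse directions. -/
theorem truncated_small_ball
    {Ω : Type*} [MeasurableSpace Ω] (μ : Measure Ω) [IsProbabilityMeasure μ]
    {d : ℕ} (x : Ω → Fin d → ℝ) (hxmeas : Measurable x)
    (δ Q ν : ℝ) (hδ : 0 < δ) (hQ : 0 < Q) (hν : 0 < ν)
    (N : ℕ) (s₀ : ℕ) (hs₀ : 1 ≤ s₀) (hs₀d : s₀ ≤ d)
    (hcent : ∫ ω, x ω ∂μ = 0)
    (hsmallball : ∀ v : Fin d → ℝ,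
      ENNReal.ofReal (2 * Q) ≤
        μ {ω | 2 * δ * Real.sqrt (∑ j, (v j) ^ 2) ≤ |∑ j, x ω j * v j|})
    (hint4 : ∀ j, Integrable (fun ω => (x ω j) ^ 4) μ)
    (hmom4 : ∀ j, ∫ ω, (x ω j) ^ 4 ∂μ ≤ ν)
    (hN : (ν / Q) * s₀ * Real.log (Real.exp 1 * d) ≤ N) :
    ∀ v : Fin d → ℝ,
      (Finset.univ.filter fun j => v j ≠ 0).card ≤ s₀ →
      ENNReal.ofReal Q ≤
        μ {ω | δ * Real.sqrt (∑ j, (v j) ^ 2) ≤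
          |∑ j, (Real.sign (x ω j) *
            min |x ω j| (((N : ℝ) / Real.log (Real.exp 1 * d)) ^ ((1 : ℝ) / 4))) * v j|} :=
  truncated_small_ball_general μ x δ Q ν hδ hQ hν N s₀ hs₀ hs₀d hsmallball hint4 hmom4 hN

end
end

section
/- Let x = μ B U be an elliptically symmetric random vector in R^d with Σ = BBᵀ having λ_min(Σ) > 0. Then the normalized vector √d·x/‖x‖₂ is sub-Gaussian: for every p ≥ 1 and every v ∈ R^d, E[|⟨√d x/‖x‖₂, v⟩|^p]^{1/p} ≤ √p · C · √(λ_max(Σ)/λ_min(Σ)) · ‖v‖₂, where C is the ψ₂-norm of √d U. -/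
open MeasureTheory ProbabilityTheory Real

noncomputable section

set_option maxHeartbeats 1000000

/-- The normalized elliptical vector `√d · x/‖x‖₂` is sub-Gaussian: its directional
`L_p` moments grow like `√p`, with constant `C √(λ_max(Σ)/λ_min(Σ))` where `C` is the
ψ₂-norm of `√d U`. -/
theorem normalized_elliptical_subgaussian
    {Ω : Type*} [MeasurableSpace Ω] (P : Measure Ω) [IsProbabilityMeasure P]
    {d : ℕ} (hd : 1 ≤ d)
    (m : Ω → ℝ) (U : Ω → Fin d → ℝ) (B : Matrix (Fin d) (Fin d) ℝ)
    (x : Ω → Fin d → ℝ)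
    (hxdef : ∀ ω, x ω = fun i => m ω * (B.mulVec (U ω)) i)
    (hmmeas : Measurable m) (hUmeas : Measurable U)
    (hindep : IndepFun m U P)
    (hUsphere : ∀ ω, ∑ j, (U ω j) ^ 2 = 1)
    (lmin lmax : ℝ) (hlmin : 0 < lmin)
    (hSigma : ∀ v : Fin d → ℝ,
      lmin * (∑ j, (v j) ^ 2) ≤ ∑ i, v i * ((B * B.transpose).mulVec v) i ∧
      ∑ i, v i * ((B * B.transpose).mulVec v) i ≤ lmax * (∑ j, (v j) ^ 2))
    (C : ℝ) (hC : 0 ≤ C)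
    -- `C` is the ψ₂-norm of `√d U`: directional `L_p` moments of `√d U` are ≤ `C √p`.
    (hCpsi2 : ∀ p : ℝ, 1 ≤ p → ∀ w : Fin d → ℝ, (∑ j, (w j) ^ 2) = 1 →
      (∫ ω, |∑ j, (Real.sqrt d * U ω j) * w j| ^ p ∂P) ^ (1 / p) ≤ C * Real.sqrt p)
    (p : ℝ) (hp : 1 ≤ p) (v : Fin d → ℝ)
    (hint : Integrable
      (fun ω => |∑ j, (Real.sqrt d * x ω j / Real.sqrt (∑ k, (x ω k) ^ 2)) * v j| ^ p) P) :
    (∫ ω, |∑ j, (Real.sqrt d * x ω j / Real.sqrt (∑ k, (x ω k) ^ 2)) * v j| ^ p ∂P) ^ (1 / p)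
      ≤ Real.sqrt p * C * Real.sqrt (lmax / lmin) * Real.sqrt (∑ j, (v j) ^ 2) := by
  classical
  have hp0 : (0:ℝ) < p := lt_of_lt_of_le one_pos hp
  have hpne : p ≠ 0 := ne_of_gt hp0
  -- rewrite the quadratic form of Σ = B Bᵀ
  have hquad : ∀ u : Fin d → ℝ,
      ∑ i, u i * ((B * B.transpose).mulVec u) i = ∑ j, ((B.transpose.mulVec u) j)^2 := by
    intro u
    rw [← Matrix.mulVec_mulVec]
    have h1 : ∑ i, u i * (B.mulVec (B.transpose.mulVec u)) i
        = dotProduct u (B.mulVec (B.transpose.mulVec u)) := rfl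
    rw [h1, Matrix.dotProduct_mulVec, ← Matrix.mulVec_transpose]
    simp [dotProduct, sq]
  have hlow : ∀ u : Fin d → ℝ, lmin * (∑ j, u j ^ 2) ≤ ∑ j, (B.transpose.mulVec u j)^2 :=
    fun u => (hquad u) ▸ (hSigma u).1
  have hhigh : ∀ u : Fin d → ℝ, ∑ j, (B.transpose.mulVec u j)^2 ≤ lmax * (∑ j, u j ^ 2) :=
    fun u => (hquad u) ▸ (hSigma u).2
  have hlmax : lmin ≤ lmax := by
    have h1 := hlow (fun _ => 1)
    have h2 := hhigh (fun _ => 1)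
    have hS : ∑ _j : Fin d, (1:ℝ)^2 = d := by simp
    rw [hS] at h1 h2
    have hdpos : (0:ℝ) < d := by exact_mod_cast hd
    nlinarith [le_trans h1 h2]
  -- Bᵀ is surjective
  have hinj : Function.Injective B.transpose.mulVecLin := by
    rw [← LinearMap.ker_eq_bot, LinearMap.ker_eq_bot']
    intro u hu
    have h := hlow u
    rw [show B.transpose.mulVecLin u = B.transpose.mulVec u from rfl] at hu
    rw [hu] at h
    simp only [Pi.zero_apply, ne_eq, OfNat.ofNat_ne_zero, not_false_eq_true, zero_pow,
      Finset.sum_const_zero] at h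
    have hnn : (0:ℝ) ≤ ∑ j, u j ^ 2 := Finset.sum_nonneg fun j _ => sq_nonneg _
    have hz : ∑ j, u j ^ 2 = 0 := le_antisymm (by nlinarith) hnn
    have hall := (Finset.sum_eq_zero_iff_of_nonneg (fun j _ => sq_nonneg (u j))).mp hz
    funext j
    exact pow_eq_zero_iff two_ne_zero |>.mp (hall j (Finset.mem_univ j))
  have hsurj : Function.Surjective B.transpose.mulVecLin :=
    (LinearMap.injective_iff_surjective).mp hinj
  -- lower bound for B itself
  have hBlow : ∀ u : Fin d → ℝ, lmin * (∑ j, u j ^ 2) ≤ ∑ j, (B.mulVec u j)^2 := by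
    intro u
    have hBnn : (0:ℝ) ≤ ∑ j, (B.mulVec u j)^2 := Finset.sum_nonneg fun j _ => sq_nonneg _
    rcases eq_or_ne (∑ j, u j ^2) 0 with h0 | h0
    · rw [h0]; simpa using hBnn
    obtain ⟨w, hw⟩ := hsurj u
    have hw' : B.transpose.mulVec w = u := hw
    have hcs : (∑ j, (B.mulVec u) j * w j)^2 ≤ (∑ j, (B.mulVec u j)^2) * (∑ j, w j ^2) :=
      Finset.sum_mul_sq_le_sq_mul_sq _ _ _
    have hkey : ∑ j, (B.mulVec u) j * w j = ∑ j, u j ^ 2 := by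
      have h1 : ∑ j, (B.mulVec u) j * w j = dotProduct w (B.mulVec u) := by
        simp [dotProduct, mul_comm]
      rw [h1, Matrix.dotProduct_mulVec, ← Matrix.mulVec_transpose, hw']
      simp [dotProduct, sq]
    rw [hkey] at hcs
    have hwb : lmin * (∑ j, w j ^2) ≤ ∑ j, u j ^2 := by
      have := hlow w; rw [hw'] at this; exact this
    have hupos : 0 < ∑ j, u j ^2 :=
      lt_of_le_of_ne (Finset.sum_nonneg fun j _ => sq_nonneg _) (Ne.symm h0)
    nlinarith [mul_le_mul_of_nonneg_left hcs hlmin.le, mul_le_mul_of_nonneg_left hwb hBnn]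
  -- upper bound for B itself
  have hBhigh : ∀ u : Fin d → ℝ, ∑ j, (B.mulVec u j)^2 ≤ lmax * (∑ j, u j ^2) := by
    intro u
    set z := B.mulVec u with hz
    have hT : ∑ j, z j ^ 2 = ∑ j, (B.transpose.mulVec z) j * u j := by
      have h1 : ∑ j, z j ^2 = dotProduct z (B.mulVec u) := by
        simp [dotProduct, sq, hz]
      rw [h1, Matrix.dotProduct_mulVec, ← Matrix.mulVec_transpose]
      rfl
    have hcs : (∑ j, (B.transpose.mulVec z) j * u j)^2
        ≤ (∑ j, (B.transpose.mulVec z j)^2) * (∑ j, u j ^2) :=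
      Finset.sum_mul_sq_le_sq_mul_sq _ _ _
    have h3 := hhigh z
    have hTnn : (0:ℝ) ≤ ∑ j, z j ^ 2 := Finset.sum_nonneg fun j _ => sq_nonneg _
    have hunn : (0:ℝ) ≤ ∑ j, u j ^ 2 := Finset.sum_nonneg fun j _ => sq_nonneg _
    rcases eq_or_ne (∑ j, z j ^2) 0 with h0 | h0
    · rw [h0]; exact mul_nonneg (le_trans hlmin.le hlmax) hunn
    have hTpos : 0 < ∑ j, z j ^ 2 := lt_of_le_of_ne hTnn (Ne.symm h0)
    rw [← hT] at hcs
    nlinarith [mul_le_mul_of_nonneg_right h3 hunn]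
  -- trivial case v = 0
  rcases eq_or_ne (∑ j, v j ^2) 0 with hv0 | hv0
  · have hv : ∀ j, v j = 0 := by
      intro j
      exact pow_eq_zero_iff two_ne_zero |>.mp
        ((Finset.sum_eq_zero_iff_of_nonneg (fun j _ => sq_nonneg (v j))).mp hv0 j
          (Finset.mem_univ j))
    simp only [hv, mul_zero, Finset.sum_const_zero, abs_zero, Real.zero_rpow hpne,
      integral_zero, Real.zero_rpow (one_div_ne_zero hpne)]
    positivity
  -- main case
  have hvpos : 0 < ∑ j, v j ^ 2 :=
    lt_of_le_of_ne (Finset.sum_nonneg fun j _ => sq_nonneg _) (Ne.symm hv0)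
  set btv := B.transpose.mulVec v with hbtv
  have hbtvpos : 0 < ∑ j, btv j ^ 2 :=
    lt_of_lt_of_le (by positivity) (hlow v)
  set nb := Real.sqrt (∑ j, btv j ^ 2) with hnb
  have hnbpos : 0 < nb := Real.sqrt_pos.mpr hbtvpos
  set w : Fin d → ℝ := fun j => btv j / nb with hwdef
  have hw1 : ∑ j, w j ^ 2 = 1 := by
    simp only [hwdef, div_pow]
    rw [← Finset.sum_div, hnb, Real.sq_sqrt hbtvpos.le, div_self hbtvpos.ne']
  set nv := Real.sqrt (∑ j, v j ^ 2) with hnv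
  have hnvpos : 0 < nv := Real.sqrt_pos.mpr hvpos
  set K := Real.sqrt (lmax / lmin) * nv with hK
  have hK0 : 0 ≤ K := mul_nonneg (Real.sqrt_nonneg _) (Real.sqrt_nonneg _)
  have hlmax0 : 0 ≤ lmax := le_trans hlmin.le hlmax
  -- pointwise bound on the base quantities
  have hbase : ∀ ω, |∑ j, (Real.sqrt d * x ω j / Real.sqrt (∑ k, (x ω k) ^ 2)) * v j|
      ≤ K * |∑ j, (Real.sqrt d * U ω j) * w j| := by
    intro ω
    set bu := B.mulVec (U ω) with hbu
    have hxj : ∀ j, x ω j = m ω * bu j := fun j => by rw [hxdef ω]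
    have hs : ∑ k, (x ω k)^2 = (m ω)^2 * ∑ k, bu k ^2 := by
      rw [Finset.mul_sum]
      exact Finset.sum_congr rfl fun k _ => by rw [hxj k]; ring
    have hbu2 : lmin ≤ ∑ k, bu k ^2 := by
      have h := hBlow (U ω); rw [hUsphere ω] at h; simpa using h
    have hbupos : 0 < ∑ k, bu k ^2 := lt_of_lt_of_le hlmin hbu2
    set nbu := Real.sqrt (∑ k, bu k ^2) with hnbu
    have hnbupos : 0 < nbu := Real.sqrt_pos.mpr hbupos
    have hq : ∑ j, bu j * v j = ∑ j, U ω j * btv j := by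
      have h1 : ∑ j, bu j * v j = dotProduct v bu := by
        simp [dotProduct, mul_comm]
      rw [h1, hbu, Matrix.dotProduct_mulVec, ← Matrix.mulVec_transpose, ← hbtv]
      exact Finset.sum_congr rfl fun j _ => mul_comm _ _
    have hss : Real.sqrt (∑ k, (x ω k)^2) = |m ω| * nbu := by
      rw [hs, Real.sqrt_mul (sq_nonneg _), Real.sqrt_sq_eq_abs]
    have hA : ∑ j, (Real.sqrt d * x ω j / Real.sqrt (∑ k, (x ω k) ^ 2)) * v j
        = (Real.sqrt d * m ω / (|m ω| * nbu)) * ∑ j, bu j * v j := by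
      rw [Finset.mul_sum]
      refine Finset.sum_congr rfl fun j _ => ?_
      rw [hxj j, hss]; ring
    have hG : ∑ j, (Real.sqrt d * U ω j) * w j
        = (Real.sqrt d / nb) * ∑ j, U ω j * btv j := by
      rw [Finset.mul_sum]
      refine Finset.sum_congr rfl fun j _ => ?_
      simp only [hwdef]; ring
    -- key scalar inequality: nb ≤ K * nbu
    have hnbub : Real.sqrt lmin ≤ nbu := by
      rw [hnbu]
      exact Real.sqrt_le_sqrt hbu2
    have hnbb : nb ≤ Real.sqrt lmax * nv := by
      rw [hnb, hnv, ← Real.sqrt_mul hlmax0]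
      exact Real.sqrt_le_sqrt (hhigh v)
    have hKnbu : nb ≤ K * nbu := by
      have hdiv : Real.sqrt (lmax / lmin) = Real.sqrt lmax / Real.sqrt lmin :=
        Real.sqrt_div hlmax0 lmin
      have hslmin : 0 < Real.sqrt lmin := Real.sqrt_pos.mpr hlmin
      have hKnv : K = Real.sqrt lmax / Real.sqrt lmin * nv := by rw [hK, hdiv]
      calc nb ≤ Real.sqrt lmax * nv := hnbb
        _ = (Real.sqrt lmax / Real.sqrt lmin * nv) * Real.sqrt lmin := by
            field_simp
        _ ≤ (Real.sqrt lmax / Real.sqrt lmin * nv) * nbu := by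
            apply mul_le_mul_of_nonneg_left hnbub
            positivity
        _ = K * nbu := by rw [hKnv]
    rcases eq_or_ne (m ω) 0 with hm0 | hm0
    · rw [hA, hm0]
      simp only [mul_zero, zero_mul, zero_div, abs_zero]
      exact mul_nonneg hK0 (abs_nonneg _)
    · rw [hA, hG, hq]
      have h1 : |Real.sqrt d * m ω / (|m ω| * nbu)| = Real.sqrt d / nbu := by
        rw [abs_div, abs_mul, abs_mul, abs_abs, abs_of_nonneg (Real.sqrt_nonneg _),
          abs_of_nonneg hnbupos.le]
        have hmne : |m ω| ≠ 0 := abs_ne_zero.mpr hm0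
        field_simp
      have h2 : |Real.sqrt d / nb| = Real.sqrt d / nb := by
        rw [abs_of_nonneg (by positivity)]
      rw [abs_mul, abs_mul, h1, h2]
      have hqnn : 0 ≤ |∑ j, U ω j * btv j| := abs_nonneg _
      have hdnn : 0 ≤ Real.sqrt d := Real.sqrt_nonneg _
      have hfrac : Real.sqrt d / nbu ≤ K * Real.sqrt d / nb := by
        rw [div_le_div_iff₀ hnbupos hnbpos]
        nlinarith [mul_le_mul_of_nonneg_left hKnbu hdnn]
      calc Real.sqrt d / nbu * |∑ j, U ω j * btv j|
          ≤ (K * Real.sqrt d / nb) * |∑ j, U ω j * btv j| :=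
            mul_le_mul_of_nonneg_right hfrac hqnn
        _ = K * (Real.sqrt d / nb * |∑ j, U ω j * btv j|) := by ring
  -- pointwise bound on the p-th powers
  have hpt : ∀ ω, |∑ j, (Real.sqrt d * x ω j / Real.sqrt (∑ k, (x ω k) ^ 2)) * v j| ^ p
      ≤ K ^ p * |∑ j, (Real.sqrt d * U ω j) * w j| ^ p := by
    intro ω
    calc |∑ j, (Real.sqrt d * x ω j / Real.sqrt (∑ k, (x ω k) ^ 2)) * v j| ^ p
        ≤ (K * |∑ j, (Real.sqrt d * U ω j) * w j|) ^ p :=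
          Real.rpow_le_rpow (abs_nonneg _) (hbase ω) hp0.le
      _ = K ^ p * |∑ j, (Real.sqrt d * U ω j) * w j| ^ p :=
          Real.mul_rpow hK0 (abs_nonneg _)
  -- the dominating function is integrable (it is bounded)
  have hGbound : ∀ ω, |∑ j, (Real.sqrt d * U ω j) * w j| ≤ Real.sqrt d := by
    intro ω
    have h1 : ∑ j, (Real.sqrt d * U ω j) * w j = Real.sqrt d * ∑ j, U ω j * w j := by
      rw [Finset.mul_sum]; exact Finset.sum_congr rfl fun j _ => by ring
    rw [h1, abs_mul, abs_of_nonneg (Real.sqrt_nonneg _)]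
    have hcs : (∑ j, U ω j * w j)^2 ≤ (∑ j, (U ω j)^2) * (∑ j, w j ^2) :=
      Finset.sum_mul_sq_le_sq_mul_sq _ _ _
    rw [hUsphere ω, hw1, one_mul] at hcs
    have habs : |∑ j, U ω j * w j| ≤ 1 := by
      have := Real.sqrt_le_sqrt hcs
      rwa [Real.sqrt_sq_eq_abs, Real.sqrt_one] at this
    nlinarith [Real.sqrt_nonneg (d:ℝ)]
  have hsum_meas : Measurable fun ω => ∑ j, (Real.sqrt d * U ω j) * w j :=
    Finset.measurable_sum _ fun j _ =>
      (measurable_const.mul ((measurable_pi_apply j).comp hUmeas)).mul_const _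
  have hGmeas : Measurable fun ω => |∑ j, (Real.sqrt d * U ω j) * w j| ^ p :=
    (Real.continuous_rpow_const (le_trans zero_le_one hp)).measurable.comp hsum_meas.abs
  have hGint : Integrable (fun ω => K ^ p * |∑ j, (Real.sqrt d * U ω j) * w j| ^ p) P := by
    apply Integrable.mono' (integrable_const (K ^ p * Real.sqrt d ^ p))
      ((hGmeas.const_mul _).aestronglyMeasurable)
    filter_upwards with ω
    rw [Real.norm_eq_abs, abs_of_nonneg (by positivity)]
    exact mul_le_mul_of_nonneg_left
      (Real.rpow_le_rpow (abs_nonneg _) (hGbound ω) hp0.le)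
      (Real.rpow_nonneg hK0 p)
  have hfnn : ∀ ω, 0 ≤ |∑ j, (Real.sqrt d * x ω j / Real.sqrt (∑ k, (x ω k) ^ 2)) * v j| ^ p :=
    fun ω => Real.rpow_nonneg (abs_nonneg _) _
  have hIGnn : 0 ≤ ∫ ω, |∑ j, (Real.sqrt d * U ω j) * w j| ^ p ∂P :=
    integral_nonneg fun ω => Real.rpow_nonneg (abs_nonneg _) _
  have hImono : (∫ ω, |∑ j, (Real.sqrt d * x ω j / Real.sqrt (∑ k, (x ω k) ^ 2)) * v j| ^ p ∂P)
      ≤ K ^ p * ∫ ω, |∑ j, (Real.sqrt d * U ω j) * w j| ^ p ∂P := by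
    rw [← integral_const_mul]
    exact integral_mono_of_nonneg (ae_of_all _ hfnn) hGint (ae_of_all _ hpt)
  calc (∫ ω, |∑ j, (Real.sqrt d * x ω j / Real.sqrt (∑ k, (x ω k) ^ 2)) * v j| ^ p ∂P) ^ (1 / p)
      ≤ (K ^ p * ∫ ω, |∑ j, (Real.sqrt d * U ω j) * w j| ^ p ∂P) ^ (1 / p) :=
        Real.rpow_le_rpow (integral_nonneg hfnn) hImono (by positivity)
    _ = K * (∫ ω, |∑ j, (Real.sqrt d * U ω j) * w j| ^ p ∂P) ^ (1 / p) := by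
        rw [Real.mul_rpow (Real.rpow_nonneg hK0 _) hIGnn,
          ← Real.rpow_mul hK0, mul_one_div, div_self hpne, Real.rpow_one]
    _ ≤ K * (C * Real.sqrt p) :=
        mul_le_mul_of_nonneg_left (hCpsi2 p hp w hw1) hK0
    _ = Real.sqrt p * C * Real.sqrt (lmax / lmin) * Real.sqrt (∑ j, (v j) ^ 2) := by
        rw [hK, hnv]; ring

end
end

section
/- Let θ₀ ∈ R^d be an s-sparse vector and ηθ* ∈ R^d satisfy ‖ηθ* − θ₀‖₁ ≤ ρ/16. Suppose ρ ≥ 8r√s. Then for every v ∈ R^d with ‖v‖₂ ≤ r and ‖v‖₁ = ρ, there exists a subgradient z of the ℓ₁-norm at θ₀ (i.e., z ∈ ∂‖·‖₁(θ₀)) such that ⟨z, v⟩ ≥ (3/4)ρ. -/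
open scoped Classical

noncomputable section

lemma subgrad_aux (z a b : ℝ) (hz : |z| ≤ 1) (ha : z * a = |a|) :
    z * b ≤ |a + b| - |a| := by
  have h : z * (a + b) ≤ |a + b| := by
    calc z * (a + b) ≤ |z * (a + b)| := le_abs_self _
    _ = |z| * |a + b| := abs_mul _ _
    _ ≤ 1 * |a + b| := by
        exact mul_le_mul_of_nonneg_right hz (abs_nonneg _)
    _ = |a + b| := one_mul _
  nlinarith [h]

/-- Sparse subdifferential lower bound: if `θ₀` is `s`-sparse, `‖ηθ* − θ₀‖₁ ≤ ρ/16`, and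
`ρ ≥ 8 r √s`, then every `v` with `‖v‖₂ ≤ r` and `‖v‖₁ = ρ` admits a subgradient `z` of the
`ℓ₁`-norm at `θ₀` with `⟨z, v⟩ ≥ (3/4) ρ`. -/
theorem sparse_subdifferential_bound
    {d : ℕ} (θη θ₀ : Fin d → ℝ) (s : ℕ)
    (hsparse : (Finset.univ.filter fun j => θ₀ j ≠ 0).card ≤ s)
    (r ρ : ℝ) (hr : 0 ≤ r) (hρ : 0 < ρ)
    (hclose : ∑ j, |θη j - θ₀ j| ≤ ρ / 16)
    (hρr : 8 * r * Real.sqrt s ≤ ρ) :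
    ∀ v : Fin d → ℝ, Real.sqrt (∑ j, (v j) ^ 2) ≤ r → (∑ j, |v j|) = ρ →
      ∃ z : Fin d → ℝ,
        (∀ u : Fin d → ℝ, ∑ j, z j * u j ≤ (∑ j, |θ₀ j + u j|) - ∑ j, |θ₀ j|) ∧
        (3 / 4) * ρ ≤ ∑ j, z j * v j := by
  intro v hv2 hv1
  set z : Fin d → ℝ := fun j =>
    if θ₀ j ≠ 0 then (if 0 ≤ θ₀ j then 1 else -1) else (if 0 ≤ v j then 1 else -1) with hzdef
  have hzabs : ∀ j, |z j| ≤ 1 := by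
    intro j
    simp only [hzdef]
    split_ifs <;> simp
  have hzθ : ∀ j, z j * θ₀ j = |θ₀ j| := by
    intro j
    simp only [hzdef]
    by_cases h : θ₀ j ≠ 0
    · rw [if_pos h]
      rcases le_or_gt 0 (θ₀ j) with h1 | h1
      · rw [if_pos h1, abs_of_nonneg h1, one_mul]
      · rw [if_neg (not_le.mpr h1), abs_of_neg h1]; ring
    · push_neg at h
      simp [h]
  refine ⟨z, ?_, ?_⟩
  · intro u
    rw [← Finset.sum_sub_distrib]
    exact Finset.sum_le_sum fun j _ => subgrad_aux (z j) (θ₀ j) (u j) (hzabs j) (hzθ j)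
  · -- lower bound
    set G : Finset (Fin d) := Finset.univ.filter fun j => θ₀ j ≠ 0 with hGdef
    have hsplit : ∀ f : Fin d → ℝ, ∑ j, f j =
        ∑ j ∈ G, f j + ∑ j ∈ Finset.univ.filter (fun j => ¬ θ₀ j ≠ 0), f j := by
      intro f
      rw [hGdef, Finset.sum_filter_add_sum_filter_not]
    -- off support: z j * v j = |v j|
    have hoff : ∑ j ∈ Finset.univ.filter (fun j => ¬ θ₀ j ≠ 0), z j * v j
        = ∑ j ∈ Finset.univ.filter (fun j => ¬ θ₀ j ≠ 0), |v j| := by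
      apply Finset.sum_congr rfl
      intro j hj
      simp only [Finset.mem_filter, not_not] at hj
      simp only [hzdef, hj.2, ne_eq, not_true_eq_false, if_false]
      rcases le_or_gt 0 (v j) with h1 | h1
      · rw [if_pos h1, abs_of_nonneg h1, one_mul]
      · rw [if_neg (not_le.mpr h1), abs_of_neg h1]; ring
    have hon : ∀ j ∈ G, -|v j| ≤ z j * v j := by
      intro j _
      have := abs_mul (z j) (v j)
      have h2 : |z j * v j| ≤ |v j| := by
        rw [abs_mul]
        calc |z j| * |v j| ≤ 1 * |v j| :=
          mul_le_mul_of_nonneg_right (hzabs j) (abs_nonneg _)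
        _ = |v j| := one_mul _
      linarith [neg_abs_le (z j * v j), abs_le.mp h2]
    -- Cauchy-Schwarz on G
    have hCS : ∑ j ∈ G, |v j| ≤ Real.sqrt s * r := by
      have h1 : (∑ j ∈ G, |v j|) ^ 2 ≤ (G.card : ℝ) * ∑ j ∈ G, (v j) ^ 2 := by
        have := Finset.sum_mul_sq_le_sq_mul_sq G (fun _ => (1 : ℝ)) (fun j => |v j|)
        simpa [sq_abs] using this
      have h2 : ∑ j ∈ G, (v j) ^ 2 ≤ ∑ j, (v j) ^ 2 :=
        Finset.sum_le_sum_of_subset_of_nonneg (Finset.subset_univ _)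
          (fun j _ _ => sq_nonneg _)
      have h3 : (∑ j ∈ G, |v j|) ^ 2 ≤ (s : ℝ) * ∑ j, (v j) ^ 2 := by
        have hcard : (G.card : ℝ) ≤ (s : ℝ) := by exact_mod_cast hsparse
        have hsum0 : (0 : ℝ) ≤ ∑ j ∈ G, (v j) ^ 2 :=
          Finset.sum_nonneg fun j _ => sq_nonneg _
        nlinarith
      have h4 : ∑ j ∈ G, |v j| ≤ Real.sqrt ((s : ℝ) * ∑ j, (v j) ^ 2) := by
        have hnn : 0 ≤ ∑ j ∈ G, |v j| := Finset.sum_nonneg fun j _ => abs_nonneg _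
        rw [← Real.sqrt_sq hnn]
        exact Real.sqrt_le_sqrt h3
      calc ∑ j ∈ G, |v j| ≤ Real.sqrt ((s : ℝ) * ∑ j, (v j) ^ 2) := h4
        _ = Real.sqrt s * Real.sqrt (∑ j, (v j) ^ 2) := Real.sqrt_mul (Nat.cast_nonneg s) _
        _ ≤ Real.sqrt s * r := mul_le_mul_of_nonneg_left hv2 (Real.sqrt_nonneg _)
    have hG8 : ∑ j ∈ G, |v j| ≤ ρ / 8 := by
      have : Real.sqrt s * r ≤ ρ / 8 := by nlinarith
      linarith
    have key : ρ - 2 * ∑ j ∈ G, |v j| ≤ ∑ j, z j * v j := by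
      have h1 : ∑ j, z j * v j =
          ∑ j ∈ G, z j * v j + ∑ j ∈ Finset.univ.filter (fun j => ¬ θ₀ j ≠ 0), z j * v j :=
        hsplit _
      have h2 : ρ = ∑ j ∈ G, |v j| + ∑ j ∈ Finset.univ.filter (fun j => ¬ θ₀ j ≠ 0), |v j| := by
        rw [← hv1]; exact hsplit _
      have h3 : ∑ j ∈ G, -|v j| ≤ ∑ j ∈ G, z j * v j := Finset.sum_le_sum hon
      rw [Finset.sum_neg_distrib] at h3
      rw [h1, hoff]
      linarith
    linarith
end
end

section
/- Let θ₀ ∈ R^{m×n} be a matrix of rank s, and suppose ‖ηθ* − θ₀‖_* ≤ ρ/16 and ρ ≥ 16r√s. Then for every matrix W ∈ R^{m×n} with Frobenius norm ‖W‖_F ≤ r and nuclear norm ‖W‖_* = ρ, there exists a matrix z in the subdifferential of the nuclear norm at θ₀ such that ⟨z, W⟩ ≥ (3/4)ρ. -/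
/-!
Write `θ₀ = U Σ Vᵀ`, let `P = U Uᵀ`, `Q = V Vᵀ`, and take an SVD `B = U_B Σ_B V_Bᵀ` of
`B = (1 - P) W (1 - Q)`. Since `B V = 0` and `Uᵀ B = 0`, the columns of `U_B` and `V_B` are
orthogonal to those of `U` and `V`, so `z = U Vᵀ + U_B V_Bᵀ` pairs two orthonormal families. Against
an SVD of any `X`, Cauchy–Schwarz and Bessel give `⟨z, X⟩ ≤ ‖X‖_*`, while `⟨z, θ₀⟩ = ‖θ₀‖_*`: so `z`
is a subgradient at `θ₀`. Moreover `⟨z, B⟩ = ‖B‖_*`, and splitting `W = P W + (1 - P) W Q + B`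
gives `⟨z, W⟩ ≥ ‖W‖_* - 2 (‖P W‖_* + ‖(1 - P) W Q‖_*)`. Both matrices have rank at most `s` and
Frobenius norm at most `r`, hence nuclear norm at most `√s r ≤ ρ / 16`.
-/

noncomputable section

/-- Nuclear norm of a real matrix: sum of its singular values. -/
def nuclearNorm {m n : ℕ} (A : Matrix (Fin m) (Fin n) ℝ) : ℝ :=
  ∑ j, Real.sqrt ((Matrix.isHermitian_conjTranspose_mul_self A).eigenvalues j)

/-- Frobenius norm of a real matrix. -/
def frobNorm {m n : ℕ} (A : Matrix (Fin m) (Fin n) ℝ) : ℝ :=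
  Real.sqrt (∑ i, ∑ j, (A i j) ^ 2)

/-- Frobenius inner product of two matrices. -/
def matInner {m n : ℕ} (A B : Matrix (Fin m) (Fin n) ℝ) : ℝ :=
  Matrix.trace (A.transpose * B)

open Matrix Finset

def OrthonormalOn {ι κ : Type*} [Fintype κ] [DecidableEq ι] (S : Finset ι) (u : ι → κ → ℝ) :
    Prop :=
  ∀ i ∈ S, ∀ j ∈ S, u i ⬝ᵥ u j = if i = j then 1 else 0

namespace OrthonormalOn

variable {ι ι' κ : Type*} [Fintype κ] [DecidableEq ι] [DecidableEq ι'] {S : Finset ι}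
  {u : ι → κ → ℝ}

theorem sum_dotProduct_smul {M : Type*} [AddCommMonoid M] [Module ℝ M] (hu : OrthonormalOn S u)
    {k : ι} (hk : k ∈ S) (x : ι → M) : ∑ j ∈ S, (u j ⬝ᵥ u k) • x j = x k := by
  rw [Finset.sum_congr rfl fun j hj => by rw [hu j hj k hk, ite_smul, one_smul, zero_smul],
    Finset.sum_ite_eq' S k, if_pos hk]

theorem dotProduct_self (hu : OrthonormalOn S u) {k : ι} (hk : k ∈ S) : u k ⬝ᵥ u k = 1 := by
  rw [hu k hk k hk, if_pos rfl]

theorem sum_sq_dotProduct_le (hu : OrthonormalOn S u) (c : κ → ℝ) :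
    ∑ j ∈ S, (u j ⬝ᵥ c) ^ 2 ≤ c ⬝ᵥ c := by
  set p := ∑ j ∈ S, (u j ⬝ᵥ c) • u j
  have hpc : p ⬝ᵥ c = ∑ j ∈ S, (u j ⬝ᵥ c) ^ 2 := by
    simp only [p, sum_dotProduct, smul_dotProduct, smul_eq_mul, sq]
  have hup : ∀ k ∈ S, u k ⬝ᵥ p = u k ⬝ᵥ c := fun k hk =>
    calc u k ⬝ᵥ p = ∑ j ∈ S, (u j ⬝ᵥ u k) • (u j ⬝ᵥ c) := by
          rw [dotProduct_sum]
          exact Finset.sum_congr rfl fun j _ => by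
            rw [dotProduct_smul, smul_eq_mul, smul_eq_mul, dotProduct_comm (u k), mul_comm]
      _ = u k ⬝ᵥ c := hu.sum_dotProduct_smul hk _
  have hpp : p ⬝ᵥ p = ∑ j ∈ S, (u j ⬝ᵥ c) ^ 2 := by
    change (∑ j ∈ S, (u j ⬝ᵥ c) • u j) ⬝ᵥ p = _
    rw [sum_dotProduct]
    exact Finset.sum_congr rfl fun j hj => by rw [smul_dotProduct, hup j hj, smul_eq_mul, sq]
  have := dotProduct_star_self_nonneg (c - p)
  rw [star_trivial, sub_dotProduct, dotProduct_sub, dotProduct_sub, hpp, dotProduct_comm c p,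
    hpc] at this
  linarith

theorem sum_dotProduct_mul_dotProduct_le {κ' : Type*} [Fintype κ'] {v : ι → κ' → ℝ}
    (hu : OrthonormalOn S u) (hv : OrthonormalOn S v) {a : κ → ℝ} {b : κ' → ℝ}
    (ha : a ⬝ᵥ a = 1) (hb : b ⬝ᵥ b = 1) :
    ∑ j ∈ S, (u j ⬝ᵥ a) * (v j ⬝ᵥ b) ≤ 1 := by
  have hsq : (∑ j ∈ S, (u j ⬝ᵥ a) * (v j ⬝ᵥ b)) ^ 2 ≤ 1 :=
    calc (∑ j ∈ S, (u j ⬝ᵥ a) * (v j ⬝ᵥ b)) ^ 2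
        ≤ (∑ j ∈ S, (u j ⬝ᵥ a) ^ 2) * ∑ j ∈ S, (v j ⬝ᵥ b) ^ 2 :=
          Finset.sum_mul_sq_le_sq_mul_sq S _ _
      _ ≤ 1 * 1 := mul_le_mul (ha ▸ hu.sum_sq_dotProduct_le a) (hb ▸ hv.sum_sq_dotProduct_le b)
          (Finset.sum_nonneg fun j _ => sq_nonneg _) zero_le_one
      _ = 1 := one_mul 1
  nlinarith

theorem disjSum {u' : ι' → κ → ℝ} {T : Finset ι'} (hu : OrthonormalOn S u)
    (hu' : OrthonormalOn T u') (horth : ∀ i ∈ S, ∀ j ∈ T, u i ⬝ᵥ u' j = 0) :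
    OrthonormalOn (S.disjSum T) (Sum.elim u u') := by
  rintro (i | i) hi (j | j) hj <;>
    simp only [Finset.inl_mem_disjSum, Finset.inr_mem_disjSum] at hi hj
  · simpa using hu i hi j hj
  · simpa using horth i hi j hj
  · simpa [dotProduct_comm] using horth j hj i hi
  · simpa using hu' i hi j hj

end OrthonormalOn

def outerSum {ι m n : Type*} (S : Finset ι) (u : ι → m → ℝ) (v : ι → n → ℝ) : Matrix m n ℝ :=
  ∑ j ∈ S, vecMulVec (u j) (v j)

section outerSum

variable {ι m n : Type*} (S : Finset ι) (u : ι → m → ℝ) (v : ι → n → ℝ)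

theorem outerSum_mulVec [Fintype n] (x : n → ℝ) :
    outerSum S u v *ᵥ x = ∑ j ∈ S, (v j ⬝ᵥ x) • u j := by
  simp [outerSum, sum_mulVec, vecMulVec_mulVec]

theorem vecMul_outerSum [Fintype m] (x : m → ℝ) :
    x ᵥ* outerSum S u v = ∑ j ∈ S, (x ⬝ᵥ u j) • v j := by
  simp [outerSum, vecMul_sum, vecMul_vecMulVec]

theorem transpose_outerSum : (outerSum S u v)ᵀ = outerSum S v u := by
  simp [outerSum, transpose_sum, transpose_vecMulVec]

theorem rank_outerSum_le [Fintype m] [Fintype n] : (outerSum S u v).rank ≤ S.card := by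
  have hfactor : outerSum S u v = (of fun i (j : S) => u j i) * of fun (j : S) l => v j l := by
    ext i l
    simp [outerSum, Matrix.sum_apply, vecMulVec_apply, Matrix.mul_apply,
      ← Finset.sum_coe_sort S]
  calc (outerSum S u v).rank ≤ (of fun (j : S) l => v j l).rank :=
        hfactor ▸ rank_mul_le_right _ _
    _ ≤ Fintype.card S := rank_le_card_height _
    _ = S.card := Fintype.card_coe S

end outerSum

theorem matInner_outerSum {ι : Type*} {m n : ℕ} (S : Finset ι) (u : ι → Fin m → ℝ)
    (v : ι → Fin n → ℝ) (A : Matrix (Fin m) (Fin n) ℝ) :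
    matInner (outerSum S u v) A = ∑ j ∈ S, u j ⬝ᵥ (A *ᵥ v j) := by
  rw [matInner, transpose_outerSum, outerSum, Matrix.sum_mul, trace_sum]
  exact Finset.sum_congr rfl fun j _ => by
    rw [vecMulVec_mul, trace_vecMulVec, dotProduct_mulVec, dotProduct_comm]

namespace OrthonormalOn

variable {ι κ : Type*} [Fintype κ] [DecidableEq ι] {S : Finset ι} {u : ι → κ → ℝ}

theorem outerSum_self_mulVec (hu : OrthonormalOn S u) {k : ι} (hk : k ∈ S) :
    outerSum S u u *ᵥ u k = u k := by
  rw [outerSum_mulVec, hu.sum_dotProduct_smul hk]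

theorem vecMul_outerSum_self (hu : OrthonormalOn S u) {k : ι} (hk : k ∈ S) :
    u k ᵥ* outerSum S u u = u k := by
  rw [← transpose_outerSum, vecMul_transpose, hu.outerSum_self_mulVec hk]

theorem isIdempotentElem_outerSum_self (hu : OrthonormalOn S u) :
    IsIdempotentElem (outerSum S u u) := by
  calc outerSum S u u * outerSum S u u
      = ∑ j ∈ S, outerSum S u u * vecMulVec (u j) (u j) := Matrix.mul_sum ..
    _ = outerSum S u u :=
      Finset.sum_congr rfl fun j hj => by rw [mul_vecMulVec, hu.outerSum_self_mulVec hj]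

end OrthonormalOn

section Frobenius

variable {m n : ℕ}

theorem trace_transpose_mul_self (A : Matrix (Fin m) (Fin n) ℝ) :
    trace (Aᵀ * A) = ∑ i, ∑ j, A i j ^ 2 := by
  rw [trace, Finset.sum_comm]
  simp [Matrix.mul_apply, sq]

theorem frobNorm_eq_sqrt_trace (A : Matrix (Fin m) (Fin n) ℝ) :
    frobNorm A = √(trace (Aᵀ * A)) := by
  rw [frobNorm, trace_transpose_mul_self]

theorem frobNorm_transpose (A : Matrix (Fin m) (Fin n) ℝ) : frobNorm Aᵀ = frobNorm A := by
  simp only [frobNorm, transpose_apply]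
  rw [Finset.sum_comm]

theorem frobNorm_idempotent_mul_le {P : Matrix (Fin m) (Fin m) ℝ}
    (hP : IsIdempotentElem P) (hPt : Pᵀ = P) (W : Matrix (Fin m) (Fin n) ℝ) :
    frobNorm (P * W) ≤ frobNorm W := by
  have hcompress : ∀ R : Matrix (Fin m) (Fin m) ℝ, IsIdempotentElem R → Rᵀ = R →
      (R * W)ᵀ * (R * W) = Wᵀ * R * W := fun R hR hRt => by
    rw [transpose_mul, hRt, Matrix.mul_assoc, ← Matrix.mul_assoc R, hR.eq, Matrix.mul_assoc]
  have hcomplement : 0 ≤ trace (((1 - P) * W)ᵀ * ((1 - P) * W)) := by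
    rw [trace_transpose_mul_self]
    positivity
  rw [hcompress _ hP.one_sub (by rw [transpose_sub, transpose_one, hPt]), Matrix.mul_sub,
    Matrix.sub_mul, Matrix.mul_one, trace_sub] at hcomplement
  rw [frobNorm_eq_sqrt_trace, frobNorm_eq_sqrt_trace, hcompress P hP hPt]
  exact Real.sqrt_le_sqrt (by linarith)

theorem frobNorm_mul_idempotent_le {Q : Matrix (Fin n) (Fin n) ℝ}
    (hQ : IsIdempotentElem Q) (hQt : Qᵀ = Q) (W : Matrix (Fin m) (Fin n) ℝ) :
    frobNorm (W * Q) ≤ frobNorm W := by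
  rw [← frobNorm_transpose, transpose_mul, hQt, ← frobNorm_transpose W]
  exact frobNorm_idempotent_mul_le hQ hQt Wᵀ

end Frobenius

structure SVD {m n : ℕ} (A : Matrix (Fin m) (Fin n) ℝ) where
  support : Finset (Fin n)
  σ : Fin n → ℝ
  u : Fin n → Fin m → ℝ
  v : Fin n → Fin n → ℝ
  σ_pos : ∀ j ∈ support, 0 < σ j
  orthonormalOn_u : OrthonormalOn support u
  orthonormalOn_v : OrthonormalOn support v
  eq_sum : A = ∑ j ∈ support, σ j • vecMulVec (u j) (v j)
  nuclearNorm_eq : nuclearNorm A = ∑ j ∈ support, σ j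
  card_support : support.card = A.rank

namespace SVD

variable {m n : ℕ} {A : Matrix (Fin m) (Fin n) ℝ} (d : SVD A)

theorem mulVec_eq (x : Fin n → ℝ) : A *ᵥ x = ∑ k ∈ d.support, (d.v k ⬝ᵥ x) • d.σ k • d.u k := by
  conv_lhs => rw [d.eq_sum]
  simp only [sum_mulVec, smul_mulVec, vecMulVec_mulVec, op_smul_eq_smul]
  exact Finset.sum_congr rfl fun k _ => smul_comm _ _ _

theorem vecMul_eq (x : Fin m → ℝ) : x ᵥ* A = ∑ k ∈ d.support, (x ⬝ᵥ d.u k) • d.σ k • d.v k := by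
  conv_lhs => rw [d.eq_sum]
  simp only [vecMul_sum, vecMul_smul, vecMul_vecMulVec]
  exact Finset.sum_congr rfl fun k _ => smul_comm _ _ _

theorem mulVec_v {j : Fin n} (hj : j ∈ d.support) : A *ᵥ d.v j = d.σ j • d.u j := by
  rw [d.mulVec_eq]
  exact d.orthonormalOn_v.sum_dotProduct_smul hj _

theorem u_vecMul {j : Fin n} (hj : j ∈ d.support) : d.u j ᵥ* A = d.σ j • d.v j := by
  rw [d.vecMul_eq]
  simp_rw [dotProduct_comm (d.u j)]
  exact d.orthonormalOn_u.sum_dotProduct_smul hj _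

theorem mulVec_eq_zero {x : Fin n → ℝ} (hx : ∀ k ∈ d.support, d.v k ⬝ᵥ x = 0) : A *ᵥ x = 0 := by
  rw [d.mulVec_eq]
  exact Finset.sum_eq_zero fun k hk => by rw [hx k hk, zero_smul]

theorem dotProduct_v_eq_zero {x : Fin n → ℝ} (hx : A *ᵥ x = 0) {j : Fin n} (hj : j ∈ d.support) :
    x ⬝ᵥ d.v j = 0 := by
  have h : d.σ j * (x ⬝ᵥ d.v j) = 0 := by
    rw [← smul_eq_mul, ← dotProduct_smul, ← d.u_vecMul hj, dotProduct_comm, ← dotProduct_mulVec,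
      hx, dotProduct_zero]
  exact (mul_eq_zero.mp h).resolve_left (d.σ_pos j hj).ne'

theorem dotProduct_u_eq_zero {x : Fin m → ℝ} (hx : x ᵥ* A = 0) {j : Fin n} (hj : j ∈ d.support) :
    x ⬝ᵥ d.u j = 0 := by
  have h : d.σ j * (x ⬝ᵥ d.u j) = 0 := by
    rw [← smul_eq_mul, ← dotProduct_smul, ← d.mulVec_v hj, dotProduct_mulVec, hx, zero_dotProduct]
  exact (mul_eq_zero.mp h).resolve_left (d.σ_pos j hj).ne'

def polarFactor : Matrix (Fin m) (Fin n) ℝ := outerSum d.support d.u d.v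

def leftProj : Matrix (Fin m) (Fin m) ℝ := outerSum d.support d.u d.u

def rightProj : Matrix (Fin n) (Fin n) ℝ := outerSum d.support d.v d.v

theorem matInner_polarFactor_self : matInner d.polarFactor A = nuclearNorm A := by
  rw [polarFactor, matInner_outerSum, d.nuclearNorm_eq]
  refine Finset.sum_congr rfl fun j hj => ?_
  rw [d.mulVec_v hj, dotProduct_smul, d.orthonormalOn_u.dotProduct_self hj, smul_eq_mul, mul_one]

theorem matInner_polarFactor_eq_zero {X : Matrix (Fin m) (Fin n) ℝ}
    (hX : ∀ k ∈ d.support, X *ᵥ d.v k = 0) : matInner d.polarFactor X = 0 := by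
  rw [polarFactor, matInner_outerSum]
  exact Finset.sum_eq_zero fun k hk => by rw [hX k hk, dotProduct_zero]

theorem sum_sq_σ : ∑ j ∈ d.support, d.σ j ^ 2 = ∑ i, ∑ l, A i l ^ 2 := by
  have hA : A = outerSum d.support (fun j => d.σ j • d.u j) d.v := by
    conv_lhs => rw [d.eq_sum]
    simp only [outerSum, smul_vecMulVec]
  rw [← trace_transpose_mul_self, ← matInner]
  conv_rhs => arg 1; rw [hA]
  rw [matInner_outerSum]
  refine Finset.sum_congr rfl fun j hj => ?_
  rw [d.mulVec_v hj, smul_dotProduct, dotProduct_smul, d.orthonormalOn_u.dotProduct_self hj,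
    smul_eq_mul, smul_eq_mul, mul_one, sq]

end SVD

namespace Matrix.IsHermitian

variable {n : Type*} [Fintype n] [DecidableEq n] {H : Matrix n n ℝ} (hH : H.IsHermitian)

theorem orthonormalOn_eigenvectorBasis :
    OrthonormalOn Finset.univ fun j => ⇑(hH.eigenvectorBasis j) := by
  intro i _ j _
  have := orthonormal_iff_ite.mp hH.eigenvectorBasis.orthonormal i j
  simpa [EuclideanSpace.inner_eq_star_dotProduct, dotProduct_comm] using this

theorem sum_vecMulVec_eigenvectorBasis :
    ∑ j, vecMulVec ⇑(hH.eigenvectorBasis j) ⇑(hH.eigenvectorBasis j) = 1 := by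
  have h := Unitary.coe_mul_star_self hH.eigenvectorUnitary
  ext i l
  simpa [Matrix.sum_apply, vecMulVec_apply, Matrix.mul_apply] using congrFun₂ h i l

end Matrix.IsHermitian

theorem nonempty_svd {m n : ℕ} (A : Matrix (Fin m) (Fin n) ℝ) : Nonempty (SVD A) := by
  set hH := isHermitian_conjTranspose_mul_self A
  set lam := hH.eigenvalues
  set q : Fin n → Fin n → ℝ := fun j => ⇑(hH.eigenvectorBasis j)
  have hAq : ∀ i j, (A *ᵥ q i) ⬝ᵥ (A *ᵥ q j) = if i = j then lam j else 0 := fun i j => by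
    rw [← vecMul_transpose, ← dotProduct_mulVec, mulVec_mulVec,
      ← conjTranspose_eq_transpose_of_trivial, hH.mulVec_eigenvectorBasis, dotProduct_smul,
      hH.orthonormalOn_eigenvectorBasis i (mem_univ i) j (mem_univ j), smul_eq_mul, mul_ite,
      mul_one, mul_zero]
  set K := univ.filter fun j => lam j ≠ 0
  set σ : Fin n → ℝ := fun j => √(lam j)
  have hσ_sq : ∀ j, σ j * σ j = lam j := fun j =>
    Real.mul_self_sqrt (eigenvalues_conjTranspose_mul_self_nonneg A j)
  have hσ_pos : ∀ j ∈ K, 0 < σ j := fun j hj => Real.sqrt_pos.mpr <|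
    (eigenvalues_conjTranspose_mul_self_nonneg A j).lt_of_ne' (mem_filter.mp hj).2
  have hAq_zero : ∀ j ∉ K, A *ᵥ q j = 0 := fun j hj => by
    rw [← dotProduct_self_eq_zero, hAq, if_pos rfl]
    simpa [K] using hj
  set u : Fin n → Fin m → ℝ := fun j => (σ j)⁻¹ • A *ᵥ q j
  have hu : OrthonormalOn K u := fun i hi j hj => by
    simp only [u, smul_dotProduct, dotProduct_smul, hAq, smul_eq_mul]
    split_ifs with hij
    · subst hij
      rw [← hσ_sq]
      field_simp [(hσ_pos i hi).ne']
    · simp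
  have hq : OrthonormalOn K q := fun i _ j _ =>
    hH.orthonormalOn_eigenvectorBasis i (mem_univ i) j (mem_univ j)
  refine ⟨⟨K, σ, u, q, hσ_pos, hu, hq, ?_, ?_, ?_⟩⟩
  · calc A = A * ∑ j, vecMulVec (q j) (q j) := by
          rw [hH.sum_vecMulVec_eigenvectorBasis, Matrix.mul_one]
      _ = ∑ j, vecMulVec (A *ᵥ q j) (q j) := by simp only [Matrix.mul_sum, mul_vecMulVec]
      _ = ∑ j ∈ K, vecMulVec (A *ᵥ q j) (q j) :=
          (sum_subset (subset_univ K) fun j _ hj => by rw [hAq_zero j hj, zero_vecMulVec]).symm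
      _ = ∑ j ∈ K, σ j • vecMulVec (u j) (q j) := sum_congr rfl fun j hj => by
          rw [← smul_vecMulVec, smul_inv_smul₀ (hσ_pos j hj).ne']
  · exact (sum_filter_of_ne fun j _ hj => (Real.sqrt_ne_zero'.mp hj).ne').symm
  · rw [← rank_conjTranspose_mul_self, hH.rank_eq_card_non_zero_eigs, Fintype.card_subtype]

section NuclearNorm

variable {m n : ℕ}

theorem matInner_add (A B C : Matrix (Fin m) (Fin n) ℝ) :
    matInner A (B + C) = matInner A B + matInner A C := by
  rw [matInner, matInner, matInner, Matrix.mul_add, trace_add]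

theorem matInner_neg (A B : Matrix (Fin m) (Fin n) ℝ) : matInner A (-B) = -matInner A B := by
  rw [matInner, matInner, Matrix.mul_neg, trace_neg]

theorem matInner_sub (A B C : Matrix (Fin m) (Fin n) ℝ) :
    matInner A (B - C) = matInner A B - matInner A C := by
  rw [sub_eq_add_neg, matInner_add, matInner_neg, ← sub_eq_add_neg]

theorem add_matInner (A B C : Matrix (Fin m) (Fin n) ℝ) :
    matInner (A + B) C = matInner A C + matInner B C := by
  rw [matInner, matInner, matInner, transpose_add, Matrix.add_mul, trace_add]

theorem nuclearNorm_neg (A : Matrix (Fin m) (Fin n) ℝ) : nuclearNorm (-A) = nuclearNorm A := by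
  have h : (-A)ᴴ * -A = Aᴴ * A := by simp
  unfold nuclearNorm
  simp_rw [h]

theorem matInner_outerSum_le_nuclearNorm {ι : Type*} [DecidableEq ι] {S : Finset ι}
    {u : ι → Fin m → ℝ} {v : ι → Fin n → ℝ} (hu : OrthonormalOn S u) (hv : OrthonormalOn S v)
    (A : Matrix (Fin m) (Fin n) ℝ) : matInner (outerSum S u v) A ≤ nuclearNorm A := by
  obtain ⟨d⟩ := nonempty_svd A
  calc matInner (outerSum S u v) A
      = ∑ k ∈ d.support, d.σ k * ∑ j ∈ S, (u j ⬝ᵥ d.u k) * (v j ⬝ᵥ d.v k) := by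
        simp only [matInner_outerSum, d.mulVec_eq, dotProduct_sum, dotProduct_smul,
          smul_eq_mul, Finset.mul_sum]
        rw [Finset.sum_comm]
        exact sum_congr rfl fun k _ => sum_congr rfl fun j _ => by
          rw [dotProduct_comm (d.v k)]; ring
    _ ≤ ∑ k ∈ d.support, d.σ k * 1 := sum_le_sum fun k hk =>
        mul_le_mul_of_nonneg_left (hu.sum_dotProduct_mul_dotProduct_le hv
          (d.orthonormalOn_u.dotProduct_self hk) (d.orthonormalOn_v.dotProduct_self hk))
          (d.σ_pos k hk).le
    _ = nuclearNorm A := by simp only [mul_one, d.nuclearNorm_eq]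

theorem SVD.matInner_polarFactor_le {A : Matrix (Fin m) (Fin n) ℝ} (d : SVD A)
    (X : Matrix (Fin m) (Fin n) ℝ) : matInner d.polarFactor X ≤ nuclearNorm X :=
  matInner_outerSum_le_nuclearNorm d.orthonormalOn_u d.orthonormalOn_v X

theorem nuclearNorm_add_le (A B : Matrix (Fin m) (Fin n) ℝ) :
    nuclearNorm (A + B) ≤ nuclearNorm A + nuclearNorm B := by
  obtain ⟨d⟩ := nonempty_svd (A + B)
  rw [← d.matInner_polarFactor_self, matInner_add]
  exact add_le_add (d.matInner_polarFactor_le A) (d.matInner_polarFactor_le B)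

theorem nuclearNorm_le_sqrt_mul_frobNorm {A : Matrix (Fin m) (Fin n) ℝ} {t : ℕ}
    (ht : A.rank ≤ t) : nuclearNorm A ≤ √t * frobNorm A := by
  obtain ⟨d⟩ := nonempty_svd A
  have hσ : 0 ≤ ∑ j ∈ d.support, d.σ j := sum_nonneg fun j hj => (d.σ_pos j hj).le
  have hsq : (∑ j ∈ d.support, d.σ j) ^ 2 ≤ t * ∑ j ∈ d.support, d.σ j ^ 2 :=
    (sq_sum_le_card_mul_sum_sq).trans <| mul_le_mul_of_nonneg_right
      (by exact_mod_cast d.card_support ▸ ht) (sum_nonneg fun j _ => sq_nonneg _)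
  rw [d.nuclearNorm_eq, frobNorm, ← d.sum_sq_σ, ← Real.sqrt_mul t.cast_nonneg,
    ← Real.sqrt_sq hσ]
  exact Real.sqrt_le_sqrt hsq

end NuclearNorm

section Subgradient

variable {m n : ℕ}

theorem nuclearNorm_add_matInner_sub_le {z θ : Matrix (Fin m) (Fin n) ℝ}
    (hz : ∀ X, matInner z X ≤ nuclearNorm X) (hθ : matInner z θ = nuclearNorm θ)
    (W : Matrix (Fin m) (Fin n) ℝ) : nuclearNorm θ + matInner z (W - θ) ≤ nuclearNorm W := by
  rw [matInner_sub, hθ]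
  linarith [hz W]

theorem neg_nuclearNorm_le_matInner {z : Matrix (Fin m) (Fin n) ℝ}
    (hz : ∀ X, matInner z X ≤ nuclearNorm X) (X : Matrix (Fin m) (Fin n) ℝ) :
    -nuclearNorm X ≤ matInner z X := by
  have h := hz (-X)
  rw [matInner_neg, nuclearNorm_neg] at h
  linarith

variable {A B : Matrix (Fin m) (Fin n) ℝ} (d : SVD A) (e : SVD B)

theorem matInner_polarFactor_add_le
    (hu : ∀ k ∈ d.support, ∀ j ∈ e.support, d.u k ⬝ᵥ e.u j = 0)
    (hv : ∀ k ∈ d.support, ∀ j ∈ e.support, d.v k ⬝ᵥ e.v j = 0) (X : Matrix (Fin m) (Fin n) ℝ) :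
    matInner (d.polarFactor + e.polarFactor) X ≤ nuclearNorm X := by
  have hz : d.polarFactor + e.polarFactor =
      outerSum (d.support.disjSum e.support) (Sum.elim d.u e.u) (Sum.elim d.v e.v) := by
    simp only [SVD.polarFactor, outerSum, sum_disjSum, Sum.elim_inl, Sum.elim_inr]
  rw [hz]
  exact matInner_outerSum_le_nuclearNorm (d.orthonormalOn_u.disjSum e.orthonormalOn_u hu)
    (d.orthonormalOn_v.disjSum e.orthonormalOn_v hv) X

theorem matInner_polarFactor_add_left
    (hv : ∀ k ∈ d.support, ∀ j ∈ e.support, d.v k ⬝ᵥ e.v j = 0) :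
    matInner (d.polarFactor + e.polarFactor) A = nuclearNorm A := by
  rw [add_matInner, d.matInner_polarFactor_self,
    e.matInner_polarFactor_eq_zero fun j hj => d.mulVec_eq_zero fun k hk => hv k hk j hj,
    add_zero]

theorem matInner_polarFactor_add_right
    (hv : ∀ k ∈ d.support, ∀ j ∈ e.support, d.v k ⬝ᵥ e.v j = 0) :
    matInner (d.polarFactor + e.polarFactor) B = nuclearNorm B := by
  rw [add_matInner, e.matInner_polarFactor_self,
    d.matInner_polarFactor_eq_zero fun k hk => e.mulVec_eq_zero fun j hj => by
      rw [dotProduct_comm, hv k hk j hj],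
    zero_add]

end Subgradient

namespace SVD

variable {m n : ℕ} {A : Matrix (Fin m) (Fin n) ℝ} (d : SVD A) (W : Matrix (Fin m) (Fin n) ℝ)

def orthPart : Matrix (Fin m) (Fin n) ℝ := (1 - d.leftProj) * W * (1 - d.rightProj)

theorem orthPart_mulVec_v {k : Fin n} (hk : k ∈ d.support) : d.orthPart W *ᵥ d.v k = 0 := by
  rw [orthPart, ← mulVec_mulVec, sub_mulVec, one_mulVec, rightProj,
    d.orthonormalOn_v.outerSum_self_mulVec hk, sub_self, mulVec_zero]

theorem u_vecMul_orthPart {k : Fin n} (hk : k ∈ d.support) : d.u k ᵥ* d.orthPart W = 0 := by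
  rw [orthPart, Matrix.mul_assoc, ← vecMul_vecMul, vecMul_sub, vecMul_one, leftProj,
    d.orthonormalOn_u.vecMul_outerSum_self hk, sub_self, zero_vecMul]

theorem dotProduct_u_orthPart (e : SVD (d.orthPart W)) :
    ∀ k ∈ d.support, ∀ j ∈ e.support, d.u k ⬝ᵥ e.u j = 0 := fun _ hk _ hj =>
  e.dotProduct_u_eq_zero (d.u_vecMul_orthPart W hk) hj

theorem dotProduct_v_orthPart (e : SVD (d.orthPart W)) :
    ∀ k ∈ d.support, ∀ j ∈ e.support, d.v k ⬝ᵥ e.v j = 0 := fun _ hk _ hj =>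
  e.dotProduct_v_eq_zero (d.orthPart_mulVec_v W hk) hj

theorem nuclearNorm_leftProj_mul_le :
    nuclearNorm (d.leftProj * W) ≤ √A.rank * frobNorm W := by
  have hrank : (d.leftProj * W).rank ≤ A.rank :=
    (rank_mul_le_left _ _).trans <| (rank_outerSum_le _ _ _).trans d.card_support.le
  refine (nuclearNorm_le_sqrt_mul_frobNorm hrank).trans <| mul_le_mul_of_nonneg_left ?_
    (Real.sqrt_nonneg _)
  exact frobNorm_idempotent_mul_le d.orthonormalOn_u.isIdempotentElem_outerSum_self
    (transpose_outerSum _ _ _) W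

theorem nuclearNorm_one_sub_leftProj_mul_mul_rightProj_le :
    nuclearNorm ((1 - d.leftProj) * W * d.rightProj) ≤ √A.rank * frobNorm W := by
  have hrank : ((1 - d.leftProj) * W * d.rightProj).rank ≤ A.rank :=
    (rank_mul_le_right _ _).trans <| (rank_outerSum_le _ _ _).trans d.card_support.le
  refine (nuclearNorm_le_sqrt_mul_frobNorm hrank).trans <| mul_le_mul_of_nonneg_left ?_
    (Real.sqrt_nonneg _)
  have hP := d.orthonormalOn_u.isIdempotentElem_outerSum_self
  calc frobNorm ((1 - d.leftProj) * W * d.rightProj) ≤ frobNorm ((1 - d.leftProj) * W) :=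
        frobNorm_mul_idempotent_le d.orthonormalOn_v.isIdempotentElem_outerSum_self
          (transpose_outerSum _ _ _) _
    _ ≤ frobNorm W := frobNorm_idempotent_mul_le hP.one_sub
        (by rw [transpose_sub, transpose_one, transpose_outerSum]) W

theorem nuclearNorm_sub_le_matInner_polarFactor_add (e : SVD (d.orthPart W)) :
    nuclearNorm W - 2 * (nuclearNorm (d.leftProj * W) +
      nuclearNorm ((1 - d.leftProj) * W * d.rightProj)) ≤
      matInner (d.polarFactor + e.polarFactor) W := by
  set P := d.leftProj
  set Q := d.rightProj
  set z := d.polarFactor + e.polarFactor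
  have hv := d.dotProduct_v_orthPart W e
  have hz := matInner_polarFactor_add_le d e (d.dotProduct_u_orthPart W e) hv
  have hW : W = P * W + (1 - P) * W * Q + d.orthPart W := by
    rw [orthPart, add_assoc, ← Matrix.mul_add, add_sub_cancel, Matrix.mul_one, ← Matrix.add_mul,
      add_sub_cancel, Matrix.one_mul]
  have htriangle : nuclearNorm W ≤
      nuclearNorm (P * W) + nuclearNorm ((1 - P) * W * Q) + nuclearNorm (d.orthPart W) :=
    calc nuclearNorm W = nuclearNorm (P * W + (1 - P) * W * Q + d.orthPart W) := congrArg _ hW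
      _ ≤ _ := (nuclearNorm_add_le _ _).trans (add_le_add_left (nuclearNorm_add_le _ _) _)
  have hzW : matInner z W =
      matInner z (P * W) + matInner z ((1 - P) * W * Q) + nuclearNorm (d.orthPart W) :=
    calc matInner z W = matInner z (P * W + (1 - P) * W * Q + d.orthPart W) := congrArg _ hW
      _ = _ := by rw [matInner_add, matInner_add, matInner_polarFactor_add_right d e hv]
  linarith [neg_nuclearNorm_le_matInner hz (P * W),
    neg_nuclearNorm_le_matInner hz ((1 - P) * W * Q)]

end SVD

theorem lowrank_subdifferential_bound_general
    {m n : ℕ}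
    (θ₀ : Matrix (Fin m) (Fin n) ℝ) (s : ℕ)
    (hrank : θ₀.rank = s)
    (r ρ : ℝ)
    (hρr : 16 * r * Real.sqrt s ≤ ρ) :
    ∀ W : Matrix (Fin m) (Fin n) ℝ, frobNorm W ≤ r → nuclearNorm W = ρ →
      ∃ z : Matrix (Fin m) (Fin n) ℝ,
        (∀ W' : Matrix (Fin m) (Fin n) ℝ,
          nuclearNorm θ₀ + matInner z (W' - θ₀) ≤ nuclearNorm W') ∧
        (3 / 4) * ρ ≤ matInner z W := by
  intro W hWr hWρ
  obtain ⟨d⟩ := nonempty_svd θ₀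
  obtain ⟨e⟩ := nonempty_svd (d.orthPart W)
  have hu := d.dotProduct_u_orthPart W e
  have hv := d.dotProduct_v_orthPart W e
  refine ⟨d.polarFactor + e.polarFactor, nuclearNorm_add_matInner_sub_le
    (matInner_polarFactor_add_le d e hu hv) (matInner_polarFactor_add_left d e hv), ?_⟩
  have hsr : √s * frobNorm W ≤ √s * r := mul_le_mul_of_nonneg_left hWr (Real.sqrt_nonneg _)
  have h1 := d.nuclearNorm_leftProj_mul_le W
  have h2 := d.nuclearNorm_one_sub_leftProj_mul_mul_rightProj_le W
  rw [hrank] at h1 h2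
  linarith [d.nuclearNorm_sub_le_matInner_polarFactor_add W e]

/-- Low-rank subdifferential lower bound: if `θ₀` has rank `s`, `‖ηθ* − θ₀‖_* ≤ ρ/16`,
and `ρ ≥ 16 r √s`, then every `W` with `‖W‖_F ≤ r` and `‖W‖_* = ρ` admits a subgradient
`z` of the nuclear norm at `θ₀` with `⟨z, W⟩ ≥ (3/4) ρ`. -/
theorem lowrank_subdifferential_bound
    {m n : ℕ} (hm : 0 < m) (hn : 0 < n)
    (θη θ₀ : Matrix (Fin m) (Fin n) ℝ) (s : ℕ)
    (hrank : θ₀.rank = s)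
    (r ρ : ℝ) (hr : 0 ≤ r) (hρ : 0 < ρ)
    (hclose : nuclearNorm (θη - θ₀) ≤ ρ / 16)
    (hρr : 16 * r * Real.sqrt s ≤ ρ) :
    ∀ W : Matrix (Fin m) (Fin n) ℝ, frobNorm W ≤ r → nuclearNorm W = ρ →
      ∃ z : Matrix (Fin m) (Fin n) ℝ,
        (∀ W' : Matrix (Fin m) (Fin n) ℝ,
          nuclearNorm θ₀ + matInner z (W' - θ₀) ≤ nuclearNorm W') ∧
        (3 / 4) * ρ ≤ matInner z W :=
  lowrank_subdifferential_bound_general θ₀ s hrank r ρ hρr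

end
end

section
/- Maurey-type lower bound for quadratic forms: let Γ: R^d → R^N be a linear map and s₀ an integer with 1 < s₀ ≤ d. Assume ‖Γv‖₂ ≥ ξ‖v‖₂ for every vector v with at most s₀ non-zero coordinates, for some ξ > 0. Then for every non-zero x ∈ R^d, ‖Γx‖₂² ≥ ξ²‖x‖₂² − (‖x‖₁²/(s₀−1))·(Σ_{j=1}^d ‖Γe_j‖₂² μ_j − ξ²), where μ_j = |x_j|/‖x‖₁ and e_j are the standard basis vectors. -/
open scoped Classical

noncomputable section

lemma sum_pi_prod {s d : ℕ} (F : Fin s → Fin d → ℝ) :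
    ∑ ω : Fin s → Fin d, ∏ k, F k (ω k) = ∏ k, ∑ j, F k j := by
  rw [Finset.prod_univ_sum, Fintype.piFinset_univ]

lemma expect_one {s d : ℕ} (μ : Fin d → ℝ) (hμ : ∑ j, μ j = 1) (i : Fin s)
    (g : Fin d → ℝ) :
    ∑ ω : Fin s → Fin d, (∏ k, μ (ω k)) * g (ω i) = ∑ j, μ j * g j := by
  have h2 := sum_pi_prod (fun k j => μ j * (if k = i then g j else 1))
  have h1 : ∀ ω : Fin s → Fin d,
      (∏ k, μ (ω k)) * g (ω i) = ∏ k, (μ (ω k) * (if k = i then g (ω k) else 1)) := by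
    intro ω
    rw [Finset.prod_mul_distrib, Finset.prod_ite_eq' Finset.univ i (fun k => g (ω k))]
    simp
  rw [Finset.sum_congr rfl fun ω _ => h1 ω, h2, Finset.prod_eq_single i]
  · simp
  · intro k _ hk
    simp [hk, hμ]
  · simp

lemma expect_two {s d : ℕ} (μ : Fin d → ℝ) (hμ : ∑ j, μ j = 1) (i i' : Fin s)
    (hii : i ≠ i') (g h : Fin d → ℝ) :
    ∑ ω : Fin s → Fin d, (∏ k, μ (ω k)) * (g (ω i) * h (ω i'))
      = (∑ j, μ j * g j) * (∑ j, μ j * h j) := by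
  have h2 := sum_pi_prod (fun k j => μ j * ((if k = i then g j else 1) * (if k = i' then h j else 1)))
  have h1 : ∀ ω : Fin s → Fin d,
      (∏ k, μ (ω k)) * (g (ω i) * h (ω i'))
        = ∏ k, (μ (ω k) * ((if k = i then g (ω k) else 1) * (if k = i' then h (ω k) else 1))) := by
    intro ω
    rw [Finset.prod_mul_distrib, Finset.prod_mul_distrib,
      Finset.prod_ite_eq' Finset.univ i (fun k => g (ω k)),
      Finset.prod_ite_eq' Finset.univ i' (fun k => h (ω k))]
    simp
  rw [Finset.sum_congr rfl fun ω _ => h1 ω, h2,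
    ← Finset.prod_subset (Finset.subset_univ {i, i'})]
  · rw [Finset.prod_insert (by simp [hii]), Finset.prod_singleton]
    simp [hii, Ne.symm hii]
  · intro k _ hk
    simp only [Finset.mem_insert, Finset.mem_singleton, not_or] at hk
    simp [hk.1, hk.2, hμ]

lemma expect_quad {d N s : ℕ} (hs : 0 < s) (M : Matrix (Fin N) (Fin d) ℝ)
    (μ : Fin d → ℝ) (hμ : ∑ j, μ j = 1) (z : Fin d → Fin d → ℝ) (x : Fin d → ℝ)
    (hxz : ∀ r, M.mulVec x r = ∑ j, μ j * M.mulVec (z j) r) :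
    ∑ ω : Fin s → Fin d, (∏ k, μ (ω k)) *
        (∑ r, (M.mulVec ((s:ℝ)⁻¹ • ∑ i, z (ω i)) r) ^ 2)
      = (((s:ℝ) - 1)/s) * (∑ r, (M.mulVec x r) ^ 2)
        + (1/(s:ℝ)) * ∑ j, μ j * (∑ r, (M.mulVec (z j) r) ^ 2) := by
  set D : ℝ := ∑ j, μ j * (∑ r, (M.mulVec (z j) r) ^ 2) with hD
  set O : ℝ := ∑ r, (M.mulVec x r) ^ 2 with hO
  have hlin : ∀ (ω : Fin s → Fin d) (r : Fin N),
      M.mulVec ((s:ℝ)⁻¹ • ∑ i, z (ω i)) r = (s:ℝ)⁻¹ * ∑ i, M.mulVec (z (ω i)) r := by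
    intro ω r
    rw [Matrix.mulVec_smul]
    simp only [Pi.smul_apply, smul_eq_mul]
    congr 1
    have h := congrFun (map_sum M.mulVecLin (fun i => z (ω i)) Finset.univ) r
    simp only [Matrix.mulVecLin_apply, Finset.sum_apply] at h
    exact h
  have key : ∀ i i' : Fin s,
      (∑ ω : Fin s → Fin d, (∏ k, μ (ω k)) *
        (∑ r, M.mulVec (z (ω i)) r * M.mulVec (z (ω i')) r))
      = if i = i' then D else O := by
    intro i i'
    by_cases hii : i = i'
    · subst hii
      simp only [if_pos rfl, hD]
      rw [← expect_one μ hμ i (fun j => ∑ r, (M.mulVec (z j) r) ^ 2)]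
      refine Finset.sum_congr rfl fun ω _ => ?_
      congr 1
      exact Finset.sum_congr rfl fun r _ => (sq _).symm
    · simp only [if_neg hii, hO]
      calc ∑ ω : Fin s → Fin d, (∏ k, μ (ω k)) *
              (∑ r, M.mulVec (z (ω i)) r * M.mulVec (z (ω i')) r)
          = ∑ r, ∑ ω : Fin s → Fin d, (∏ k, μ (ω k)) *
              (M.mulVec (z (ω i)) r * M.mulVec (z (ω i')) r) := by
            simp_rw [Finset.mul_sum]
            exact Finset.sum_comm
        _ = ∑ r, (∑ j, μ j * M.mulVec (z j) r) * (∑ j, μ j * M.mulVec (z j) r) := by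
            exact Finset.sum_congr rfl fun r _ =>
              expect_two μ hμ i i' hii (fun j => M.mulVec (z j) r) (fun j => M.mulVec (z j) r)
        _ = ∑ r, (M.mulVec x r) ^ 2 := by
            refine Finset.sum_congr rfl fun r _ => ?_
            rw [← hxz r, sq]
  calc ∑ ω : Fin s → Fin d, (∏ k, μ (ω k)) *
          (∑ r, (M.mulVec ((s:ℝ)⁻¹ • ∑ i, z (ω i)) r) ^ 2)
      = ∑ ω : Fin s → Fin d, (∏ k, μ (ω k)) *
          ((s:ℝ)⁻¹ ^ 2 * ∑ i, ∑ i', ∑ r, M.mulVec (z (ω i)) r * M.mulVec (z (ω i')) r) := by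
        refine Finset.sum_congr rfl fun ω _ => ?_
        congr 1
        calc ∑ r, (M.mulVec ((s:ℝ)⁻¹ • ∑ i, z (ω i)) r) ^ 2
            = ∑ r, (s:ℝ)⁻¹ ^ 2 *
                (∑ i, ∑ i', M.mulVec (z (ω i)) r * M.mulVec (z (ω i')) r) := by
              refine Finset.sum_congr rfl fun r _ => ?_
              rw [hlin ω r, mul_pow, sq (∑ i, M.mulVec (z (ω i)) r), Finset.sum_mul_sum]
          _ = (s:ℝ)⁻¹ ^ 2 * ∑ i, ∑ i', ∑ r,
                M.mulVec (z (ω i)) r * M.mulVec (z (ω i')) r := by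
              rw [← Finset.mul_sum]
              congr 1
              rw [Finset.sum_comm]
              exact Finset.sum_congr rfl fun i _ => Finset.sum_comm
    _ = (s:ℝ)⁻¹ ^ 2 * ∑ i : Fin s, ∑ i' : Fin s, ∑ ω : Fin s → Fin d,
          (∏ k, μ (ω k)) * ∑ r, M.mulVec (z (ω i)) r * M.mulVec (z (ω i')) r := by
        simp only [Finset.mul_sum]
        rw [Finset.sum_comm]
        refine Finset.sum_congr rfl fun i _ => ?_
        rw [Finset.sum_comm]
        refine Finset.sum_congr rfl fun i' _ => ?_
        refine Finset.sum_congr rfl fun ω _ => ?_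
        refine Finset.sum_congr rfl fun r _ => ?_
        ring
    _ = (s:ℝ)⁻¹ ^ 2 * ∑ i : Fin s, ∑ i' : Fin s, (if i = i' then D else O) := by
        congr 1
        exact Finset.sum_congr rfl fun i _ =>
          Finset.sum_congr rfl fun i' _ => key i i'
    _ = (s:ℝ)⁻¹ ^ 2 * ((s:ℝ) * (O * (s:ℝ) + (D - O))) := by
        congr 1
        have h1 : ∀ i : Fin s, (∑ i' : Fin s, if i = i' then D else O) = O * s + (D - O) := by
          intro i
          calc (∑ i' : Fin s, if i = i' then D else O)
              = ∑ i' : Fin s, (O + if i = i' then D - O else 0) := by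
                refine Finset.sum_congr rfl fun i' _ => ?_
                by_cases h : i = i' <;> simp [h]
            _ = O * s + (D - O) := by
                rw [Finset.sum_add_distrib, Finset.sum_const, Finset.sum_ite_eq]
                simp [mul_comm]
        rw [Finset.sum_congr rfl fun i _ => h1 i, Finset.sum_const, Finset.card_univ,
          Fintype.card_fin, nsmul_eq_mul]
    _ = (((s:ℝ) - 1)/s) * O + (1/(s:ℝ)) * D := by
        have hs' : (s:ℝ) ≠ 0 := Nat.cast_ne_zero.mpr hs.ne'
        field_simp
        ring

/-- Maurey-type lower bound for quadratic forms (Lecué–Mendelson, Lemma 2.7): if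
`‖Γv‖₂ ≥ ξ‖v‖₂` for all `s₀`-sparse `v`, then for every nonzero `x`,
`‖Γx‖₂² ≥ ξ²‖x‖₂² − (‖x‖₁²/(s₀−1)) (∑_j ‖Γe_j‖₂² μ_j − ξ²)` with `μ_j = |x_j|/‖x‖₁`. -/
theorem maurey_quadratic_lower_bound
    {d N : ℕ} (Γ : Matrix (Fin N) (Fin d) ℝ)
    (s₀ : ℕ) (hs₀ : 1 < s₀) (hs₀d : s₀ ≤ d)
    (ξ : ℝ) (hξ : 0 < ξ)
    (hΓ : ∀ v : Fin d → ℝ,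
      (Finset.univ.filter fun j => v j ≠ 0).card ≤ s₀ →
      ξ * Real.sqrt (∑ j, (v j) ^ 2) ≤ Real.sqrt (∑ i, (Γ.mulVec v i) ^ 2))
    (x : Fin d → ℝ) (hx : x ≠ 0) :
    ξ ^ 2 * (∑ j, (x j) ^ 2) -
        ((∑ j, |x j|) ^ 2 / ((s₀ : ℝ) - 1)) *
          ((∑ j, (∑ i, (Γ.mulVec (Pi.single j 1) i) ^ 2) * (|x j| / ∑ j', |x j'|)) - ξ ^ 2)
      ≤ ∑ i, (Γ.mulVec x i) ^ 2 := by
  -- setup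
  obtain ⟨kk, hkk0⟩ := Function.ne_iff.mp hx
  have hkk : x kk ≠ 0 := hkk0
  set S : ℝ := ∑ j, |x j| with hSdef
  have hS : 0 < S :=
    lt_of_lt_of_le (abs_pos.mpr hkk)
      (Finset.single_le_sum (fun j _ => abs_nonneg (x j)) (Finset.mem_univ kk))
  have hSne : S ≠ 0 := hS.ne'
  set μ : Fin d → ℝ := fun j => |x j| / S with hμdef
  have hμnn : ∀ j, 0 ≤ μ j := fun j => div_nonneg (abs_nonneg _) hS.le
  have hμ1 : ∑ j, μ j = 1 := by rw [hμdef, ← Finset.sum_div, ← hSdef]; exact div_self hSne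
  have hsgnabs : ∀ a : ℝ, Real.sign a * |a| = a := by
    intro a
    rcases lt_trichotomy a 0 with h | h | h
    · rw [Real.sign_of_neg h, abs_of_neg h]; ring
    · simp [h]
    · rw [Real.sign_of_pos h, abs_of_pos h]; ring
  set z : Fin d → Fin d → ℝ := fun j => (S * Real.sign (x j)) • (Pi.single j (1:ℝ) : Fin d → ℝ) with hzdef
  have hxsum : ∑ j, μ j • z j = x := by
    funext k
    rw [Finset.sum_apply]
    simp only [hzdef, Pi.smul_apply, smul_eq_mul]
    rw [Finset.sum_eq_single k]
    · rw [Pi.single_eq_same]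
      calc μ k * (S * Real.sign (x k) * 1)
          = Real.sign (x k) * |x k| * (S / S) := by rw [hμdef]; ring
        _ = x k := by rw [hsgnabs, div_self hSne, mul_one]
    · intro j _ hjk
      rw [Pi.single_eq_of_ne (Ne.symm hjk)]
      ring
    · intro h
      exact absurd (Finset.mem_univ k) h
  have hxzM : ∀ (n : ℕ) (M : Matrix (Fin n) (Fin d) ℝ) (r : Fin n),
      M.mulVec x r = ∑ j, μ j * M.mulVec (z j) r := by
    intro n M r
    conv_lhs => rw [← hxsum]
    have h := congrFun (map_sum M.mulVecLin (fun j => μ j • z j) Finset.univ) r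
    simp only [Matrix.mulVecLin_apply, Finset.sum_apply, map_smul, Pi.smul_apply,
      smul_eq_mul] at h
    exact h
  have hsign : ∀ j, x j ≠ 0 → Real.sign (x j) ^ 2 = 1 := by
    intro j hj
    rcases lt_or_gt_of_ne hj with h | h
    · rw [Real.sign_of_neg h]; ring
    · rw [Real.sign_of_pos h]; ring
  have hz_quad : ∀ (n : ℕ) (M : Matrix (Fin n) (Fin d) ℝ),
      ∑ j, μ j * (∑ r, (M.mulVec (z j) r) ^ 2)
        = S ^ 2 * ∑ j, μ j * (∑ r, (M.mulVec (Pi.single j 1) r) ^ 2) := by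
    intro n M
    rw [Finset.mul_sum]
    refine Finset.sum_congr rfl fun j _ => ?_
    have hmv : ∀ r, M.mulVec (z j) r = (S * Real.sign (x j)) * M.mulVec (Pi.single j 1) r := by
      intro r
      rw [show z j = (S * Real.sign (x j)) • (Pi.single j (1:ℝ) : Fin d → ℝ) from rfl,
        Matrix.mulVec_smul]
      simp
    simp_rw [hmv, mul_pow, ← Finset.mul_sum]
    by_cases hxj : x j = 0
    · simp [hμdef, hxj]
    · rw [hsign j hxj]
      ring

  -- pointwise sparsity and quadratic comparison
  have hs : 0 < s₀ := by omega
  have hsparse : ∀ ω : Fin s₀ → Fin d,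
      (Finset.univ.filter fun k => ((s₀:ℝ)⁻¹ • ∑ i, z (ω i)) k ≠ 0).card ≤ s₀ := by
    intro ω
    have hsub : (Finset.univ.filter fun k => ((s₀:ℝ)⁻¹ • ∑ i, z (ω i)) k ≠ 0)
        ⊆ Finset.image ω Finset.univ := by
      intro k hk
      rw [Finset.mem_filter] at hk
      by_contra hkim
      apply hk.2
      have hzk : ∀ i : Fin s₀, z (ω i) k = 0 := by
        intro i
        have hne : k ≠ ω i := by
          intro h
          exact hkim (h ▸ Finset.mem_image_of_mem ω (Finset.mem_univ i))
        show ((S * Real.sign (x (ω i))) • (Pi.single (ω i) (1:ℝ) : Fin d → ℝ)) k = 0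
        rw [Pi.smul_apply, Pi.single_eq_of_ne hne]
        simp
      rw [Pi.smul_apply, Finset.sum_apply, Finset.sum_congr rfl fun i _ => hzk i]
      simp
    calc (Finset.univ.filter fun k => ((s₀:ℝ)⁻¹ • ∑ i, z (ω i)) k ≠ 0).card
        ≤ (Finset.image ω Finset.univ).card := Finset.card_le_card hsub
      _ ≤ (Finset.univ : Finset (Fin s₀)).card := Finset.card_image_le
      _ = s₀ := by simp
  have hsq : ∀ ω : Fin s₀ → Fin d,
      ξ^2 * (∑ k, (((s₀:ℝ)⁻¹ • ∑ i, z (ω i)) k)^2)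
        ≤ ∑ i, (Γ.mulVec ((s₀:ℝ)⁻¹ • ∑ i, z (ω i)) i)^2 := by
    intro ω
    have hA : 0 ≤ ∑ k, (((s₀:ℝ)⁻¹ • ∑ i, z (ω i)) k)^2 :=
      Finset.sum_nonneg fun k _ => sq_nonneg _
    have hB : 0 ≤ ∑ i, (Γ.mulVec ((s₀:ℝ)⁻¹ • ∑ i, z (ω i)) i)^2 :=
      Finset.sum_nonneg fun i _ => sq_nonneg _
    have h := hΓ _ (hsparse ω)
    calc ξ^2 * ∑ k, (((s₀:ℝ)⁻¹ • ∑ i, z (ω i)) k)^2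
        = (ξ * Real.sqrt (∑ k, (((s₀:ℝ)⁻¹ • ∑ i, z (ω i)) k)^2))^2 := by
          rw [mul_pow, Real.sq_sqrt hA]
      _ ≤ (Real.sqrt (∑ i, (Γ.mulVec ((s₀:ℝ)⁻¹ • ∑ i, z (ω i)) i)^2))^2 :=
          pow_le_pow_left₀ (by positivity) h 2
      _ = _ := Real.sq_sqrt hB
  have hmain : ξ^2 * (∑ ω : Fin s₀ → Fin d, (∏ k, μ (ω k)) *
        (∑ r, (((s₀:ℝ)⁻¹ • ∑ i, z (ω i)) r)^2))
      ≤ ∑ ω : Fin s₀ → Fin d, (∏ k, μ (ω k)) *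
        (∑ r, (Γ.mulVec ((s₀:ℝ)⁻¹ • ∑ i, z (ω i)) r)^2) := by
    rw [Finset.mul_sum]
    refine Finset.sum_le_sum fun ω _ => ?_
    have hp : 0 ≤ ∏ k, μ (ω k) := Finset.prod_nonneg fun k _ => hμnn _
    calc ξ^2 * ((∏ k, μ (ω k)) * (∑ r, (((s₀:ℝ)⁻¹ • ∑ i, z (ω i)) r)^2))
        = (∏ k, μ (ω k)) * (ξ^2 * (∑ r, (((s₀:ℝ)⁻¹ • ∑ i, z (ω i)) r)^2)) := by ring
      _ ≤ (∏ k, μ (ω k)) * (∑ r, (Γ.mulVec ((s₀:ℝ)⁻¹ • ∑ i, z (ω i)) r)^2) :=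
          mul_le_mul_of_nonneg_left (hsq ω) hp
  -- expectation identities
  have EG := expect_quad (s := s₀) hs Γ μ hμ1 z x (hxzM N Γ)
  have EE := expect_quad (s := s₀) hs (1 : Matrix (Fin d) (Fin d) ℝ) μ hμ1 z x (hxzM d 1)
  simp only [Matrix.one_mulVec] at EE
  have hzE : ∑ j, μ j * (∑ r, (z j r)^2) = S^2 := by
    have h1 := hz_quad d 1
    simp only [Matrix.one_mulVec] at h1
    rw [h1]
    have h2 : ∀ j : Fin d, ∑ r, ((Pi.single j (1:ℝ) : Fin d → ℝ) r)^2 = 1 := by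
      intro j
      rw [Finset.sum_eq_single j]
      · rw [Pi.single_eq_same]; norm_num
      · intro r _ hrj
        rw [Pi.single_eq_of_ne hrj]; norm_num
      · intro h; exact absurd (Finset.mem_univ j) h
    rw [Finset.sum_congr rfl fun j _ => by rw [h2 j, mul_one], hμ1, mul_one]
  have hzG := hz_quad N Γ
  have EE2 : ∑ ω : Fin s₀ → Fin d, (∏ k, μ (ω k)) *
        (∑ r, (((s₀:ℝ)⁻¹ • ∑ i, z (ω i)) r)^2)
      = (((s₀:ℝ) - 1)/(s₀:ℝ)) * (∑ j, (x j)^2) + (1/(s₀:ℝ)) * S^2 := by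
    rw [EE, hzE]
  have EG2 : ∑ ω : Fin s₀ → Fin d, (∏ k, μ (ω k)) *
        (∑ r, (Γ.mulVec ((s₀:ℝ)⁻¹ • ∑ i, z (ω i)) r)^2)
      = (((s₀:ℝ) - 1)/(s₀:ℝ)) * (∑ i, (Γ.mulVec x i)^2)
        + (1/(s₀:ℝ)) * (S^2 * ∑ j, μ j * (∑ i, (Γ.mulVec (Pi.single j 1) i)^2)) := by
    rw [EG, hzG]
  rw [EE2, EG2] at hmain
  -- final algebra
  set E := ∑ j, (x j)^2 with hE
  set Q := ∑ i, (Γ.mulVec x i)^2 with hQ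
  set T := ∑ j, μ j * (∑ i, (Γ.mulVec (Pi.single j 1) i)^2) with hT
  have hTgoal : (∑ j, (∑ i, (Γ.mulVec (Pi.single j 1) i)^2) * (|x j| / S)) = T := by
    rw [hT]
    exact Finset.sum_congr rfl fun j _ => mul_comm _ _
  rw [hTgoal]
  have ht : (2:ℝ) ≤ (s₀:ℝ) := by exact_mod_cast hs₀
  have ht0 : (0:ℝ) < (s₀:ℝ) := by linarith
  have htne : ((s₀:ℝ)) ≠ 0 := ht0.ne'
  have ht1 : (0:ℝ) < (s₀:ℝ) - 1 := by linarith
  have h3 := mul_le_mul_of_nonneg_right hmain ht0.le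
  have e1 : (ξ^2 * ((((s₀:ℝ) - 1)/(s₀:ℝ)) * E + (1/(s₀:ℝ)) * S^2)) * (s₀:ℝ)
      = ξ^2 * (((s₀:ℝ) - 1)*E + S^2) := by field_simp
  have e2 : ((((s₀:ℝ) - 1)/(s₀:ℝ)) * Q + (1/(s₀:ℝ)) * (S^2 * T)) * (s₀:ℝ)
      = ((s₀:ℝ) - 1)*Q + S^2*T := by field_simp
  rw [e1, e2] at h3
  have h4 : (ξ^2*E - Q) * ((s₀:ℝ) - 1) ≤ S^2*(T - ξ^2) := by nlinarith [h3]
  have h5 : ξ^2*E - Q ≤ S^2*(T - ξ^2)/((s₀:ℝ) - 1) := (le_div_iff₀ ht1).mpr h4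
  have h6 : S^2/((s₀:ℝ) - 1)*(T - ξ^2) = S^2*(T - ξ^2)/((s₀:ℝ) - 1) := by ring
  linarith [h5]

end
end

section
/- Let x be a random vector in R^d with sup_{‖v‖₂=1} E[⟨x,v⟩⁴] ≤ ν, and define the norm-truncation x̃ = (√d x/‖x‖₂)·((‖x‖₂/√d) ∧ τ). Then for any unit vectors u, w ∈ R^d, |E[⟨x,u⟩⟨x,w⟩ − ⟨x̃,u⟩⟨x̃,w⟩]| ≤ ν^{1/2} · P(‖x‖₂/√d ≥ τ)^{1/2}. -/
/-!
Off the event `E = {‖x‖₂/√d ≥ τ}` the truncation is the identity, and on it `x̃ = c x` with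
`0 ≤ c ≤ 1`; hence the integrand is bounded by `1_E (⟨x,u⟩² + ⟨x,w⟩²)/2`. By Cauchy–Schwarz,
`E[⟨x,v⟩² 1_E] ≤ E[⟨x,v⟩⁴]^{1/2} P(E)^{1/2} ≤ ν^{1/2} P(E)^{1/2}` for every unit vector `v`.
-/

open MeasureTheory

noncomputable section

/-- Euclidean norm of a vector in `Fin d → ℝ`. -/
def eNorm {d : ℕ} (v : Fin d → ℝ) : ℝ := Real.sqrt (∑ j, (v j) ^ 2)

/-- Norm truncation `x̃ = (√d x/‖x‖₂) ((‖x‖₂/√d) ∧ τ)`. -/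
def normTrunc {d : ℕ} (τ : ℝ) (v : Fin d → ℝ) : Fin d → ℝ :=
  fun j => (Real.sqrt d / eNorm v) * min (eNorm v / Real.sqrt d) τ * v j

theorem eNorm_eq_norm_toLp {d : ℕ} (v : Fin d → ℝ) :
    eNorm v = ‖(WithLp.toLp 2 v : EuclideanSpace ℝ (Fin d))‖ := by
  simp [eNorm, EuclideanSpace.norm_eq]

theorem continuous_eNorm {d : ℕ} : Continuous (eNorm : (Fin d → ℝ) → ℝ) := by
  unfold eNorm; fun_prop

theorem eNorm_eq_zero {d : ℕ} {v : Fin d → ℝ} : eNorm v = 0 ↔ v = 0 := by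
  simp [eNorm_eq_norm_toLp]

theorem normTrunc_eq_self {d : ℕ} {τ : ℝ} {v : Fin d → ℝ} (h : eNorm v / Real.sqrt d < τ) :
    normTrunc τ v = v := by
  funext j
  have hd : (0 : ℝ) < Real.sqrt d := Real.sqrt_pos.mpr (by exact_mod_cast j.pos)
  by_cases hv : v = 0
  · simp [normTrunc, hv]
  · have hv' : eNorm v ≠ 0 := eNorm_eq_zero.not.mpr hv
    simp only [normTrunc, min_eq_left h.le]
    field_simp

theorem exists_normTrunc_eq_smul {d : ℕ} {τ : ℝ} (hτ : 0 ≤ τ) (v : Fin d → ℝ) :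
    ∃ c ∈ Set.Icc (0 : ℝ) 1, normTrunc τ v = c • v := by
  have hd : 0 ≤ Real.sqrt d := Real.sqrt_nonneg _
  have hv : 0 ≤ eNorm v := Real.sqrt_nonneg _
  refine ⟨Real.sqrt d / eNorm v * min (eNorm v / Real.sqrt d) τ, ⟨by positivity, ?_⟩, rfl⟩
  calc Real.sqrt d / eNorm v * min (eNorm v / Real.sqrt d) τ
      ≤ Real.sqrt d / eNorm v * (eNorm v / Real.sqrt d) := by gcongr; exact min_le_left _ _
    _ ≤ 1 := by rw [div_mul_div_comm, mul_comm]; exact div_self_le_one _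

theorem abs_sub_mul_normTrunc_le {d : ℕ} {τ : ℝ} (hτ : 0 ≤ τ) (v u w : Fin d → ℝ) :
    |(∑ j, v j * u j) * (∑ j, v j * w j) -
        (∑ j, normTrunc τ v j * u j) * (∑ j, normTrunc τ v j * w j)|
      ≤ {v : Fin d → ℝ | τ ≤ eNorm v / Real.sqrt d}.indicator
          (fun v => ((∑ j, v j * u j) ^ 2 + (∑ j, v j * w j) ^ 2) / 2) v := by
  by_cases hv : τ ≤ eNorm v / Real.sqrt d
  · obtain ⟨c, ⟨hc0, hc1⟩, hc⟩ := exists_normTrunc_eq_smul hτ v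
    have hsum (u : Fin d → ℝ) : ∑ j, (c • v) j * u j = c * ∑ j, v j * u j := by
      simp only [Pi.smul_apply, smul_eq_mul, mul_assoc, Finset.mul_sum]
    rw [Set.indicator_of_mem (show v ∈ {v : Fin d → ℝ | τ ≤ eNorm v / Real.sqrt d} from hv),
      hc, hsum, hsum]
    set a := ∑ j, v j * u j
    set b := ∑ j, v j * w j
    have hab : |a * b| ≤ (a ^ 2 + b ^ 2) / 2 := by
      rw [abs_mul]; nlinarith [sq_nonneg (|a| - |b|), sq_abs a, sq_abs b]
    calc |a * b - c * a * (c * b)| = (1 - c ^ 2) * |a * b| := by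
          rw [show a * b - c * a * (c * b) = (1 - c ^ 2) * (a * b) by ring, abs_mul,
            abs_of_nonneg (by nlinarith)]
      _ ≤ (a ^ 2 + b ^ 2) / 2 := by nlinarith [abs_nonneg (a * b), hab]
  · simp [normTrunc_eq_self (not_le.mp hv), hv]

section CauchySchwarz

variable {Ω : Type*} [MeasurableSpace Ω] {μ : Measure Ω}

theorem memLp_two_sq_of_integrable_pow_four {f : Ω → ℝ} (hf : AEStronglyMeasurable f μ)
    (hf4 : Integrable (fun ω => f ω ^ 4) μ) : MemLp (fun ω => f ω ^ 2) 2 μ :=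
  (memLp_two_iff_integrable_sq (hf.pow 2)).mpr <| by
    simpa only [Pi.pow_apply, ← pow_mul] using hf4

theorem setIntegral_sq_le_sqrt_mul_sqrt [IsFiniteMeasure μ] {f : Ω → ℝ}
    (hf : AEStronglyMeasurable f μ) (hf4 : Integrable (fun ω => f ω ^ 4) μ) {E : Set Ω}
    (hE : MeasurableSet E) :
    ∫ ω in E, f ω ^ 2 ∂μ ≤ Real.sqrt (∫ ω, f ω ^ 4 ∂μ) * Real.sqrt (μ.real E) := by
  have hE2 : MemLp (E.indicator fun _ => (1 : ℝ)) (ENNReal.ofReal 2) μ := by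
    simpa using memLp_indicator_const 2 hE (1 : ℝ) (Or.inr (measure_ne_top μ E))
  have := integral_mul_le_Lp_mul_Lq_of_nonneg Real.HolderConjugate.two_two
    (ae_of_all _ fun ω => sq_nonneg (f ω))
    (ae_of_all _ (Set.indicator_nonneg fun _ _ => zero_le_one))
    (by simpa using memLp_two_sq_of_integrable_pow_four hf hf4) hE2
  simp only [← Real.sqrt_eq_rpow, Real.rpow_two, ← pow_mul] at this
  have hsq : ∀ ω, E.indicator (fun _ => (1 : ℝ)) ω ^ 2 = E.indicator (fun _ => 1) ω := fun ω => by
    by_cases hω : ω ∈ E <;> simp [hω]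
  have hmul : ∀ ω, f ω ^ 2 * E.indicator (fun _ => (1 : ℝ)) ω =
      E.indicator (fun ω => f ω ^ 2) ω := fun ω => by
    by_cases hω : ω ∈ E <;> simp [hω]
  simpa only [hsq, hmul, integral_indicator hE, ← pow_mul, setIntegral_const, smul_eq_mul,
    mul_one] using this

end CauchySchwarz

theorem norm_truncation_second_moment_bias_general
    {Ω : Type*} [MeasurableSpace Ω] (P : Measure Ω) [IsProbabilityMeasure P]
    {d : ℕ}
    (x : Ω → Fin d → ℝ) (hxmeas : Measurable x)
    (ν τ : ℝ) (hτ : 0 < τ)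
    (hmom4 : ∀ v : Fin d → ℝ, eNorm v = 1 →
      ∫ ω, (∑ j, x ω j * v j) ^ 4 ∂P ≤ ν)
    (hint4 : ∀ v : Fin d → ℝ, Integrable (fun ω => (∑ j, x ω j * v j) ^ 4) P) :
    ∀ u w : Fin d → ℝ, eNorm u = 1 → eNorm w = 1 →
      |∫ ω, ((∑ j, x ω j * u j) * (∑ j, x ω j * w j) -
          (∑ j, normTrunc τ (x ω) j * u j) * (∑ j, normTrunc τ (x ω) j * w j)) ∂P|
        ≤ Real.sqrt ν * Real.sqrt (P {ω | τ ≤ eNorm (x ω) / Real.sqrt d}).toReal := by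
  intro u w hu hw
  set E : Set Ω := {ω | τ ≤ eNorm (x ω) / Real.sqrt d}
  have hE : MeasurableSet E :=
    measurableSet_le measurable_const ((continuous_eNorm.measurable.comp hxmeas).div_const _)
  have hmeas (v : Fin d → ℝ) : AEStronglyMeasurable (fun ω => ∑ j, x ω j * v j) P :=
    (by fun_prop : Measurable fun ω => ∑ j, x ω j * v j).aestronglyMeasurable
  have hint (v : Fin d → ℝ) : IntegrableOn (fun ω => (∑ j, x ω j * v j) ^ 2) E P :=
    ((memLp_two_sq_of_integrable_pow_four (hmeas v) (hint4 v)).integrable one_le_two).integrableOn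
  have htail (v : Fin d → ℝ) (hv : eNorm v = 1) :
      ∫ ω in E, (∑ j, x ω j * v j) ^ 2 ∂P ≤ Real.sqrt ν * Real.sqrt (P.real E) :=
    (setIntegral_sq_le_sqrt_mul_sqrt (hmeas v) (hint4 v) hE).trans (by gcongr; exact hmom4 v hv)
  have hdom : Integrable
      (E.indicator fun ω => ((∑ j, x ω j * u j) ^ 2 + (∑ j, x ω j * w j) ^ 2) / 2) P :=
    (integrable_indicator_iff hE).mpr (((hint u).add (hint w)).div_const 2)
  rw [← Real.norm_eq_abs]
  refine (norm_integral_le_of_norm_le hdom (ae_of_all _ fun ω => ?_)).trans ?_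
  · exact abs_sub_mul_normTrunc_le hτ.le (x ω) u w
  rw [integral_indicator hE, integral_div, integral_add (hint u) (hint w), ← measureReal_def]
  linarith [htail u hu, htail w hw]

/-- Second-moment bias of the norm truncation: for unit vectors `u`, `w`,
`|E[⟨x,u⟩⟨x,w⟩ − ⟨x̃,u⟩⟨x̃,w⟩]| ≤ ν^{1/2} P(‖x‖₂/√d ≥ τ)^{1/2}`. -/
theorem norm_truncation_second_moment_bias
    {Ω : Type*} [MeasurableSpace Ω] (P : Measure Ω) [IsProbabilityMeasure P]
    {d : ℕ} (hd : 1 ≤ d)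
    (x : Ω → Fin d → ℝ) (hxmeas : Measurable x)
    (ν τ : ℝ) (hν : 0 < ν) (hτ : 0 < τ)
    (hmom4 : ∀ v : Fin d → ℝ, eNorm v = 1 →
      ∫ ω, (∑ j, x ω j * v j) ^ 4 ∂P ≤ ν)
    (hint4 : ∀ v : Fin d → ℝ, Integrable (fun ω => (∑ j, x ω j * v j) ^ 4) P)
    (hint : ∀ u w : Fin d → ℝ, Integrable
      (fun ω => (∑ j, x ω j * u j) * (∑ j, x ω j * w j) -
        (∑ j, normTrunc τ (x ω) j * u j) * (∑ j, normTrunc τ (x ω) j * w j)) P) :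
    ∀ u w : Fin d → ℝ, eNorm u = 1 → eNorm w = 1 →
      |∫ ω, ((∑ j, x ω j * u j) * (∑ j, x ω j * w j) -
          (∑ j, normTrunc τ (x ω) j * u j) * (∑ j, normTrunc τ (x ω) j * w j)) ∂P|
        ≤ Real.sqrt ν * Real.sqrt (P {ω | τ ≤ eNorm (x ω) / Real.sqrt d}).toReal :=
  norm_truncation_second_moment_bias_general P x hxmeas ν τ hτ hmom4 hint4
end
end
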